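/- arXiv:1201.6480 — 8 statements merged into one kernel-verified Lean document; each statement's English description precedes it below -/
import Mathlib

section
/- The function h₁(x) = (sin(x)/x - cos²(x)) / sin²(x) is strictly decreasing on (0, π). -/
/-!
Differentiating, `h₁'(x) = -(sin² x + x cos x (sin x - 2x)) / (x² sin³ x)`, so it suffices
that the numerator is positive on `(0, π)`. Where `cos x ≤ 0` this is clear from `sin x < x`.
Where `cos x > 0` we have `x < π / 2`, and the Taylor bounds `x - x³/6 ≤ sin x` and
`cos x ≤ 1 - x²/2 + x⁴/24` bound the numerator below by `x⁶ (10 - x²) / 144 > 0`.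
-/

open Real

theorem cos_le_one_sub_sq_div_two_add_pow_four_div (x : ℝ) :
    cos x ≤ 1 - x ^ 2 / 2 + x ^ 4 / 24 := by
  let g (x : ℝ) : ℝ := 1 - x ^ 2 / 2 + x ^ 4 / 24 - cos x
  have hg (y : ℝ) : HasDerivAt g (sin y - (y - y ^ 3 / 6)) y :=
    ((((hasDerivAt_pow 2 y).div_const 2).const_sub 1).add
      ((hasDerivAt_pow 4 y).div_const 24)).sub (hasDerivAt_cos y) |>.congr_deriv (by ring)
  have hmono : MonotoneOn g (Set.Ici 0) :=
    monotoneOn_of_hasDerivWithinAt_nonneg (convex_Ici 0)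
      (fun y _ => (hg y).continuousAt.continuousWithinAt)
      (fun y _ => (hg y).hasDerivWithinAt)
      (fun y hy => sub_nonneg.2 (sin_ge_sub_cube (interior_subset hy)))
  have key : g 0 ≤ g |x| := hmono Set.self_mem_Ici (abs_nonneg x) (abs_nonneg x)
  simpa [g, cos_abs, sq_abs, (by norm_num : Even 4).pow_abs] using key

theorem hasDerivAt_h1 {x : ℝ} (hx : x ≠ 0) (hs : sin x ≠ 0) :
    HasDerivAt (fun x => (sin x / x - cos x ^ 2) / sin x ^ 2)
      (-(sin x ^ 2 + x * cos x * (sin x - 2 * x)) / (x ^ 2 * sin x ^ 3)) x := by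
  refine (((hasDerivAt_sin x).div (hasDerivAt_id x) hx).sub ((hasDerivAt_cos x).pow 2)).div
    ((hasDerivAt_sin x).pow 2) (pow_ne_zero 2 hs) |>.congr_deriv ?_
  simp only [id, Pi.div_apply, Pi.sub_apply, Pi.pow_apply]
  field_simp
  linear_combination (2 * x ^ 2 * cos x * sin x) * sin_sq_add_cos_sq x

theorem sin_sq_add_mul_cos_mul_sub_pos {x : ℝ} (h0 : 0 < x) (hπ : x < π) :
    0 < sin x ^ 2 + x * cos x * (sin x - 2 * x) := by
  have hs : 0 < sin x := sin_pos_of_pos_of_lt_pi h0 hπ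
  have hsx : sin x < x := sin_lt h0
  rcases le_or_gt (cos x) 0 with hc | hc
  · nlinarith [mul_nonneg (mul_nonneg h0.le (neg_nonneg.2 hc)) (by linarith : 0 ≤ 2 * x - sin x)]
  have hx_lt : x < π / 2 := by
    by_contra! h
    exact hc.not_ge (cos_nonpos_of_pi_div_two_le_of_le h (by linarith [pi_pos]))
  have hx_sq : x ^ 2 < 3 := by nlinarith [pi_lt_d2]
  have hp : 0 < x - x ^ 3 / 6 := by nlinarith [mul_pos h0 (by linarith : (0 : ℝ) < 6 - x ^ 2)]
  set p := x - x ^ 3 / 6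
  set q := 1 - x ^ 2 / 2 + x ^ 4 / 24
  have hcq : cos x ≤ q := cos_le_one_sub_sq_div_two_add_pow_four_div x
  calc 0 < x ^ 6 * (10 - x ^ 2) / 144 := by have := pow_pos h0 6; nlinarith
    _ = p ^ 2 - x * q * (2 * x - p) := by ring
    _ ≤ sin x ^ 2 - x * cos x * (2 * x - sin x) := by
      have hps : p ≤ sin x := sin_ge_sub_cube h0.le
      have hxq : 0 ≤ x * q := by nlinarith
      gcongr
      linarith
    _ = _ := by ring

theorem h1_strictAntiOn :
    StrictAntiOn (fun x : ℝ => (Real.sin x / x - Real.cos x ^ 2) / Real.sin x ^ 2)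
      (Set.Ioo 0 Real.pi) := by
  refine strictAntiOn_of_deriv_neg (convex_Ioo 0 π) (fun x hx => ?_) (fun x hx => ?_)
  · have hs := sin_pos_of_pos_of_lt_pi hx.1 hx.2
    exact (hasDerivAt_h1 hx.1.ne' hs.ne').continuousAt.continuousWithinAt
  · rw [interior_Ioo] at hx
    have hs := sin_pos_of_pos_of_lt_pi hx.1 hx.2
    rw [(hasDerivAt_h1 hx.1.ne' hs.ne').deriv, neg_div]
    exact neg_neg_of_pos <|
      div_pos (sin_sq_add_mul_cos_mul_sub_pos hx.1 hx.2) (mul_pos (pow_pos hx.1 2) (pow_pos hs 3))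
end

section
/- The function h₁(x) = (sin(x)/x - cos²(x)) / sin²(x) tends to 5/6 as x → 0⁺ and tends to -∞ as x → π⁻. -/
/-!
Since `cos² x = 1 - sin² x`, the function equals `1 + (sin x - x) / x³ · (x / sin x)²` on `(0, π)`,
and the Taylor bound `sin x = x - x³/6 + O(x⁵)` gives `1 - 1/6` at `0`. At `π` the numerator
tends to `-1` while `sin² x` tends to `0` from above.
-/

open Real Filter Topology

lemma tendsto_sin_div_self_nhdsNE_zero : Tendsto (fun x : ℝ => sin x / x) (𝓝[≠] 0) (𝓝 1) := by
  refine (sinc_zero ▸ continuous_sinc.tendsto 0 |>.mono_left nhdsWithin_le_nhds).congr' ?_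
  filter_upwards [self_mem_nhdsWithin] with x hx using sinc_of_ne_zero hx

lemma tendsto_sin_sub_self_div_pow_three_nhdsNE_zero :
    Tendsto (fun x : ℝ => (sin x - x) / x ^ 3) (𝓝[≠] 0) (𝓝 (-(1 / 6))) := by
  rw [tendsto_iff_norm_sub_tendsto_zero]
  refine squeeze_zero_norm' ?_ ((continuous_pow 2).div_const 100 |>.tendsto' 0 0 (by simp)
    |>.mono_left nhdsWithin_le_nhds)
  filter_upwards [self_mem_nhdsWithin,
    nhdsWithin_le_nhds (Icc_mem_nhds (neg_one_lt_zero : (-1 : ℝ) < 0) one_pos)] with x hx0 hx1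
  have hx0 : x ≠ 0 := hx0
  have hx3 : 0 < |x| ^ 3 := by positivity
  have hremainder : (sin x - x) / x ^ 3 - -(1 / 6) = (sin x - (x - x ^ 3 / 6)) / x ^ 3 := by
    field_simp
    ring
  rw [norm_norm, hremainder, norm_div, norm_pow, Real.norm_eq_abs, Real.norm_eq_abs, div_le_iff₀ hx3]
  calc |sin x - (x - x ^ 3 / 6)| ≤ |x| ^ 5 / 100 := sin_bound (abs_le.2 hx1)
    _ = |x| ^ 2 / 100 * |x| ^ 3 := by ring
    _ = _ := by rw [sq_abs]

lemma sin_div_sub_cos_sq_div_sin_sq_eq {x : ℝ} (hx : x ≠ 0) (hs : sin x ≠ 0) :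
    (sin x / x - cos x ^ 2) / sin x ^ 2 = (sin x - x) / x ^ 3 * (x / sin x) ^ 2 + 1 := by
  rw [cos_sq']
  field_simp
  ring

lemma tendsto_sin_sq_nhdsLT_pi : Tendsto (fun x : ℝ => sin x ^ 2) (𝓝[<] π) (𝓝[>] 0) := by
  refine tendsto_nhdsWithin_iff.2 ⟨?_, ?_⟩
  · have : ContinuousAt (fun x : ℝ => sin x ^ 2) π := by fun_prop
    simpa using this.tendsto.mono_left nhdsWithin_le_nhds
  · filter_upwards [Ioo_mem_nhdsLT pi_pos] with x hx
    exact pow_pos (sin_pos_of_pos_of_lt_pi hx.1 hx.2) 2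

lemma tendsto_sin_div_sub_cos_sq_div_sin_sq_nhdsGT_zero :
    Tendsto (fun x : ℝ => (sin x / x - cos x ^ 2) / sin x ^ 2) (𝓝[>] 0) (𝓝 (5 / 6)) := by
  have h := (tendsto_sin_sub_self_div_pow_three_nhdsNE_zero.mul
    (tendsto_sin_div_self_nhdsNE_zero.inv₀ one_ne_zero |>.pow 2)).add_const 1
  norm_num at h
  refine (h.mono_left (nhdsGT_le_nhdsNE 0)).congr' ?_
  filter_upwards [Ioo_mem_nhdsGT pi_pos] with x hx
  exact (sin_div_sub_cos_sq_div_sin_sq_eq hx.1.ne' (sin_pos_of_pos_of_lt_pi hx.1 hx.2).ne').symm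

lemma tendsto_sin_div_sub_cos_sq_div_sin_sq_nhdsLT_pi :
    Tendsto (fun x : ℝ => (sin x / x - cos x ^ 2) / sin x ^ 2) (𝓝[<] π) atBot := by
  have hnum : Tendsto (fun x : ℝ => sin x / x - cos x ^ 2) (𝓝[<] π) (𝓝 (-1)) := by
    have : ContinuousAt (fun x : ℝ => sin x / x - cos x ^ 2) π := by fun_prop (disch := positivity)
    simpa using this.tendsto.mono_left nhdsWithin_le_nhds
  simpa [div_eq_mul_inv] using
    hnum.neg_mul_atTop (by norm_num) (tendsto_inv_nhdsGT_zero.comp tendsto_sin_sq_nhdsLT_pi)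

theorem h1_limits :
    Tendsto (fun x : ℝ => (Real.sin x / x - Real.cos x ^ 2) / Real.sin x ^ 2)
        (nhdsWithin 0 (Set.Ioi 0)) (nhds (5 / 6)) ∧
      Tendsto (fun x : ℝ => (Real.sin x / x - Real.cos x ^ 2) / Real.sin x ^ 2)
        (nhdsWithin Real.pi (Set.Iio Real.pi)) atBot :=
  ⟨tendsto_sin_div_sub_cos_sq_div_sin_sq_nhdsGT_zero,
    tendsto_sin_div_sub_cos_sq_div_sin_sq_nhdsLT_pi⟩
end

section
/- The function h₃(x) = (x - sin(x)·cos(x)) / (x·sin²(x)) is strictly increasing on (0, π). -/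
/-!
The derivative of `h₃` is `Q x / (x ^ 2 * sin x ^ 3)` with
`Q x = x sin x + sin² x cos x - 2 x² cos x`. On `[π/2, π)` the cosine is nonpositive and
`sin² x ≤ x²`, so `Q x ≥ x sin x > 0`. On `(0, π/2)`, `Q x / cos x = x tan x + sin² x - 2 x²`,
and the Taylor bounds `tan x > x + x³/3`, `sin x > x - x³/6` make this exceed `x⁶/36`:
the quartic terms cancel.
-/

open Real Set

theorem Real.add_cube_div_three_lt_tan {x : ℝ} (h0 : 0 < x) (h1 : x < π / 2) :
    x + x ^ 3 / 3 < tan x := by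
  have hcos {y : ℝ} (hy : y ∈ Ioo 0 (π / 2)) : cos y ≠ 0 :=
    (cos_pos_of_mem_Ioo ⟨by linarith [pi_pos, hy.1], hy.2⟩).ne'
  have hmono : StrictMonoOn (fun y => tan y - y - y ^ 3 / 3) (Ico 0 (π / 2)) := by
    refine strictMonoOn_of_hasDerivWithinAt_pos (f' := fun y => 1 / cos y ^ 2 - 1 - y ^ 2)
      (convex_Ico 0 (π / 2)) ?_ (fun y hy => ?_) (fun y hy => ?_)
    · have := continuousOn_tan_Ioo.mono
        (Ico_subset_Ioo_left (by linarith [pi_pos] : -(π / 2) < 0))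
      fun_prop
    · rw [interior_Ico] at *
      exact (((hasDerivAt_tan (hcos hy)).sub (hasDerivAt_id y)).sub
        ((hasDerivAt_pow 3 y).div_const 3)).hasDerivWithinAt.congr_deriv (by simp)
    · rw [interior_Ico] at hy
      -- the derivative is `tan² y - y²`
      rw [one_div, ← inv_one_add_tan_sq (hcos hy), inv_inv]
      nlinarith [hy.1, lt_tan hy.1 hy.2]
  have := hmono ⟨le_rfl, by linarith⟩ ⟨h0.le, h1⟩ h0
  norm_num at this
  linarith

theorem Real.two_mul_sq_lt_mul_tan_add_sin_sq {x : ℝ} (h0 : 0 < x) (h1 : x < π / 2) :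
    2 * x ^ 2 < x * tan x + sin x ^ 2 := by
  have htan := add_cube_div_three_lt_tan h0 h1
  have hsin := sin_gt_sub_cube h0
  have hx2 : x < 2 := by linarith [pi_lt_four]
  have hcubic : 0 < x - x ^ 3 / 6 := by nlinarith [mul_pos h0 (show 0 < 6 - x ^ 2 by nlinarith)]
  nlinarith [mul_lt_mul_of_pos_left htan h0, pow_lt_pow_left₀ hsin hcubic.le two_ne_zero,
    pow_pos h0 6]

theorem Real.two_mul_sq_mul_cos_lt {x : ℝ} (h0 : 0 < x) (h1 : x < π) :
    2 * x ^ 2 * cos x < x * sin x + sin x ^ 2 * cos x := by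
  have hsin := sin_pos_of_pos_of_lt_pi h0 h1
  rcases lt_or_ge x (π / 2) with hx | hx
  · have hcos := cos_pos_of_mem_Ioo ⟨by linarith [pi_pos], hx⟩
    have htan_mul_cos : x * tan x * cos x = x * sin x := by rw [mul_assoc, tan_mul_cos hcos.ne']
    nlinarith [mul_lt_mul_of_pos_right (two_mul_sq_lt_mul_tan_add_sin_sq h0 hx) hcos]
  · have hcos := cos_nonpos_of_pi_div_two_le_of_le hx (by linarith [pi_pos])
    nlinarith [mul_pos h0 hsin, sin_sq_le_sq (x := x), mul_nonneg (neg_nonneg.2 hcos) (sq_nonneg x)]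

noncomputable def h₃ (x : ℝ) : ℝ := (x - sin x * cos x) / (x * sin x ^ 2)

theorem hasDerivAt_h₃ {x : ℝ} (hx : x ≠ 0) (hsin : sin x ≠ 0) :
    HasDerivAt h₃ ((x * sin x + sin x ^ 2 * cos x - 2 * x ^ 2 * cos x) / (x ^ 2 * sin x ^ 3)) x := by
  have := ((hasDerivAt_id' x).sub ((hasDerivAt_sin x).mul (hasDerivAt_cos x))).div
    ((hasDerivAt_id' x).mul ((hasDerivAt_sin x).pow 2)) (mul_ne_zero hx (pow_ne_zero 2 hsin))
  refine this.congr_deriv ?_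
  simp only [Pi.mul_apply, Pi.sub_apply, Pi.pow_apply, Nat.cast_ofNat]
  field_simp
  linear_combination (x * sin x ^ 2) * sin_sq_add_cos_sq x

theorem h3_strictMonoOn :
    StrictMonoOn (fun x : ℝ => (x - Real.sin x * Real.cos x) / (x * Real.sin x ^ 2))
      (Set.Ioo 0 Real.pi) := by
  change StrictMonoOn h₃ (Ioo 0 π)
  have hderiv {x : ℝ} (hx : x ∈ Ioo 0 π) :=
    hasDerivAt_h₃ hx.1.ne' (sin_pos_of_pos_of_lt_pi hx.1 hx.2).ne'
  refine strictMonoOn_of_deriv_pos (convex_Ioo 0 π)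
    (fun x hx => (hderiv hx).continuousAt.continuousWithinAt) fun x hx => ?_
  rw [interior_Ioo] at hx
  rw [(hderiv hx).deriv]
  have hsin := sin_pos_of_pos_of_lt_pi hx.1 hx.2
  exact div_pos (sub_pos.2 (two_mul_sq_mul_cos_lt hx.1 hx.2))
    (mul_pos (pow_pos hx.1 2) (pow_pos hsin 3))
end

section
/- The function h₄(x) = ((x - sin(x))·cos(x)) / (x - sin(x)·cos(x)) is strictly decreasing on (0, π). -/
/-!
After `sin² + cos² = 1`, the derivative of `h₄` is `N x / (x - sin x cos x) ^ 2` with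
`N x = (1 - cos x) cos x (x - sin x cos x) - (x - sin x) sin x (x + sin x cos x)`.
On `(0, π)` the second product is positive, so `N x < 0` is clear where `cos x ≤ 0`.
On `(0, π / 2)` both products are `x⁵ / 3 + O(x⁷)`, so they are separated by Taylor bounds
for `sin` and `cos` up to order seven, which reduce `N x < 0` to a polynomial inequality
valid for `x² ≤ 5 / 2`, which covers `x < π / 2`.
-/

open Real

theorem le_of_deriv_le_of_nonneg {f g : ℝ → ℝ} (hf : Differentiable ℝ f)
    (hg : Differentiable ℝ g) (h0 : f 0 ≤ g 0) (hderiv : ∀ t, 0 < t → deriv f t ≤ deriv g t)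
    {x : ℝ} (hx : 0 ≤ x) : f x ≤ g x := by
  have hmono : MonotoneOn (g - f) (Set.Ici 0) := by
    refine monotoneOn_of_deriv_nonneg (convex_Ici 0) (hg.sub hf).continuous.continuousOn
      (hg.sub hf).differentiableOn fun t ht => ?_
    rw [interior_Ici] at ht
    rw [deriv_sub (hg t) (hf t)]
    exact sub_nonneg.2 (hderiv t ht)
  have := hmono Set.self_mem_Ici hx hx
  simp only [Pi.sub_apply] at this
  linarith

namespace Real

theorem cos_le_quartic {x : ℝ} (hx : 0 ≤ x) : cos x ≤ 1 - x ^ 2 / 2 + x ^ 4 / 24 :=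
  le_of_deriv_le_of_nonneg (f := cos) (g := fun t => 1 - t ^ 2 / 2 + t ^ 4 / 24)
    (by fun_prop) (by fun_prop) (by norm_num) (fun t ht => by
      simp (disch := fun_prop)
      linarith [sin_ge_sub_cube ht.le]) hx

theorem sin_le_quintic {x : ℝ} (hx : 0 ≤ x) : sin x ≤ x - x ^ 3 / 6 + x ^ 5 / 120 :=
  le_of_deriv_le_of_nonneg (f := sin) (g := fun t => t - t ^ 3 / 6 + t ^ 5 / 120)
    (by fun_prop) (by fun_prop) (by norm_num) (fun t ht => by
      simp (disch := fun_prop)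
      linarith [cos_le_quartic ht.le]) hx

theorem sextic_le_cos {x : ℝ} (hx : 0 ≤ x) :
    1 - x ^ 2 / 2 + x ^ 4 / 24 - x ^ 6 / 720 ≤ cos x :=
  le_of_deriv_le_of_nonneg (f := fun t => 1 - t ^ 2 / 2 + t ^ 4 / 24 - t ^ 6 / 720) (g := cos)
    (by fun_prop) (by fun_prop) (by norm_num) (fun t ht => by
      simp (disch := fun_prop)
      linarith [sin_le_quintic ht.le]) hx

theorem septic_le_sin {x : ℝ} (hx : 0 ≤ x) :
    x - x ^ 3 / 6 + x ^ 5 / 120 - x ^ 7 / 5040 ≤ sin x :=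
  le_of_deriv_le_of_nonneg (f := fun t => t - t ^ 3 / 6 + t ^ 5 / 120 - t ^ 7 / 5040) (g := sin)
    (by fun_prop) (by fun_prop) (by norm_num) (fun t ht => by
      simp (disch := fun_prop)
      linarith [sextic_le_cos ht.le]) hx

theorem abs_sin_mul_cos_lt {x : ℝ} (hx : 0 < x) : |sin x * cos x| < x := by
  have := abs_sin_lt_abs (x := 2 * x) (by positivity)
  rw [sin_two_mul, abs_mul, abs_mul, abs_two, abs_of_pos (by positivity : (0 : ℝ) < 2 * x)]
    at this
  rw [abs_mul]
  linarith

end Real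

theorem taylor_products_lt {x : ℝ} (h0 : 0 < x) (hx : x ^ 2 ≤ 5 / 2) :
    (x ^ 2 / 2 - x ^ 4 / 24 + x ^ 6 / 720) * (1 - x ^ 2 / 2 + x ^ 4 / 24) *
        (2 * x ^ 3 / 3 - 2 * x ^ 5 / 15 + 4 * x ^ 7 / 315) <
      (x ^ 3 / 6 - x ^ 5 / 120) * (x - x ^ 3 / 6) * (2 * x - 2 * x ^ 3 / 3) := by
  set u := x ^ 2
  have hu : 0 ≤ u := sq_nonneg x
  have hq : 0 < 7 / 90 - 89 / 1890 * u + 73 / 7200 * u ^ 2 - 11 / 12096 * u ^ 3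
      + 1 / 25920 * u ^ 4 - 1 / 1360800 * u ^ 5 := by
    nlinarith [sq_nonneg u, sq_nonneg (u - 1), sq_nonneg (u - 2), sq_nonneg (u ^ 2 - u),
      sq_nonneg (u * (5 / 2 - u)), mul_nonneg hu (sub_nonneg.2 hx),
      mul_nonneg (mul_nonneg hu hu) (sub_nonneg.2 hx),
      mul_nonneg (mul_nonneg (mul_nonneg hu hu) hu) (sub_nonneg.2 hx)]
  linear_combination mul_pos (pow_pos h0 7) hq

noncomputable def h4 (x : ℝ) : ℝ := ((x - sin x) * cos x) / (x - sin x * cos x)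

noncomputable def h4DerivNumerator (x : ℝ) : ℝ :=
  (1 - cos x) * cos x * (x - sin x * cos x) - (x - sin x) * sin x * (x + sin x * cos x)

theorem hasDerivAt_h4 {x : ℝ} (hx : 0 < x) :
    HasDerivAt h4 (h4DerivNumerator x / (x - sin x * cos x) ^ 2) x := by
  have hD : x - sin x * cos x ≠ 0 := by linarith [(abs_lt.1 (abs_sin_mul_cos_lt hx)).2]
  refine ((((hasDerivAt_id' x).sub (hasDerivAt_sin x)).mul (hasDerivAt_cos x)).div
    ((hasDerivAt_id' x).sub ((hasDerivAt_sin x).mul (hasDerivAt_cos x))) hD).congr_deriv ?_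
  simp only [Pi.sub_apply, Pi.mul_apply, h4DerivNumerator]
  congr 1
  linear_combination (x - sin x) * cos x * sin_sq_add_cos_sq x

theorem h4DerivNumerator_neg_of_lt_pi_div_two {x : ℝ} (h0 : 0 < x) (hx : x < π / 2) :
    h4DerivNumerator x < 0 := by
  have hsc : sin x * cos x = sin (2 * x) / 2 := by rw [sin_two_mul]; ring
  have hcos := cos_pos_of_mem_Ioo ⟨by linarith, hx⟩
  have hsin := sin_pos_of_pos_of_lt_pi h0 (by linarith [pi_pos])
  have hxs := sub_pos.2 (sin_lt h0)
  have hsc_lt := abs_lt.1 (abs_sin_mul_cos_lt h0)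
  have hx2 : x ^ 2 ≤ 5 / 2 := by nlinarith [pi_lt_d2]
  have hx3 : 0 ≤ x - x ^ 3 / 6 := by nlinarith
  have b1 : 1 - cos x ≤ x ^ 2 / 2 - x ^ 4 / 24 + x ^ 6 / 720 := by
    linarith [sextic_le_cos h0.le]
  have b2 : cos x ≤ 1 - x ^ 2 / 2 + x ^ 4 / 24 := cos_le_quartic h0.le
  have b3 : x - sin x * cos x ≤ 2 * x ^ 3 / 3 - 2 * x ^ 5 / 15 + 4 * x ^ 7 / 315 := by
    rw [hsc]; nlinarith [septic_le_sin (by positivity : (0 : ℝ) ≤ 2 * x)]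
  have b4 : x ^ 3 / 6 - x ^ 5 / 120 ≤ x - sin x := by linarith [sin_le_quintic h0.le]
  have b5 : x - x ^ 3 / 6 ≤ sin x := sin_ge_sub_cube h0.le
  have b6 : 2 * x - 2 * x ^ 3 / 3 ≤ x + sin x * cos x := by
    rw [hsc]; nlinarith [sin_ge_sub_cube (by positivity : (0 : ℝ) ≤ 2 * x)]
  have hP1 : 0 ≤ x ^ 2 / 2 - x ^ 4 / 24 + x ^ 6 / 720 := by linarith [cos_le_one x]
  have hP2 : 0 ≤ 1 - x ^ 2 / 2 + x ^ 4 / 24 := by linarith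
  have hleft :=
    mul_le_mul (mul_le_mul b1 b2 hcos.le hP1) b3 (by linarith) (mul_nonneg hP1 hP2)
  have hright := mul_le_mul (mul_le_mul b4 b5 hx3 hxs.le) b6 (by nlinarith)
    (mul_nonneg hxs.le hsin.le)
  unfold h4DerivNumerator
  linarith [taylor_products_lt h0 hx2]

theorem h4DerivNumerator_neg_of_cos_nonpos {x : ℝ} (h0 : 0 < x) (hπ : x < π)
    (hcos : cos x ≤ 0) : h4DerivNumerator x < 0 := by
  have hsin := sin_pos_of_pos_of_lt_pi h0 hπ
  have hsc_lt := abs_lt.1 (abs_sin_mul_cos_lt h0)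
  have hleft : (1 - cos x) * cos x * (x - sin x * cos x) ≤ 0 :=
    mul_nonpos_of_nonpos_of_nonneg
      (mul_nonpos_of_nonneg_of_nonpos (by linarith [cos_le_one x]) hcos) (by linarith)
  have hright : 0 < (x - sin x) * sin x * (x + sin x * cos x) :=
    mul_pos (mul_pos (by linarith [sin_lt h0]) hsin) (by linarith)
  unfold h4DerivNumerator
  linarith

theorem h4DerivNumerator_neg {x : ℝ} (hx : x ∈ Set.Ioo 0 π) : h4DerivNumerator x < 0 := by
  obtain ⟨h0, hπ⟩ := hx
  rcases le_or_gt (cos x) 0 with hcos | hcos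
  · exact h4DerivNumerator_neg_of_cos_nonpos h0 hπ hcos
  · refine h4DerivNumerator_neg_of_lt_pi_div_two h0 (lt_of_not_ge fun hx => ?_)
    linarith [cos_nonpos_of_pi_div_two_le_of_le hx (by linarith [pi_pos])]

theorem h4_strictAntiOn :
    StrictAntiOn (fun x : ℝ => ((x - Real.sin x) * Real.cos x) / (x - Real.sin x * Real.cos x))
      (Set.Ioo 0 Real.pi) := by
  refine strictAntiOn_of_deriv_neg (f := h4) (convex_Ioo 0 π)
    (fun x hx => (hasDerivAt_h4 hx.1).continuousAt.continuousWithinAt) fun x hx => ?_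
  rw [interior_Ioo] at hx
  rw [(hasDerivAt_h4 hx.1).deriv]
  exact div_neg_of_neg_of_pos (h4DerivNumerator_neg hx)
    (pow_pos (sub_pos.2 (abs_lt.1 (abs_sin_mul_cos_lt hx.1)).2) 2)
end

section
/- For all a, b > 0 with a ≠ b, the strict inequality (2/π)·A(a,b) + (1 - 2/π)·H(a,b) < P(a,b) < (5/6)·A(a,b) + (1/6)·H(a,b) holds; moreover, these constants are sharp: the left inequality holds for a coefficient α in place of 2/π for all such a, b if and only if α ≤ 2/π, and the right with β in place of 5/6 if and only if β ≥ 5/6. -/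
open Real

noncomputable def Amean (a b : ℝ) : ℝ := (a + b) / 2
noncomputable def Gmean (a b : ℝ) : ℝ := Real.sqrt (a * b)
noncomputable def Hmean (a b : ℝ) : ℝ := 2 * a * b / (a + b)
noncomputable def Cmean (a b : ℝ) : ℝ := (a ^ 2 + b ^ 2) / (a + b)
noncomputable def Cbar (a b : ℝ) : ℝ := 2 * (a ^ 2 + a * b + b ^ 2) / (3 * (a + b))
noncomputable def Smean (a b : ℝ) : ℝ := Real.sqrt ((a ^ 2 + b ^ 2) / 2)
noncomputable def Pmean (a b : ℝ) : ℝ := (a - b) / (2 * Real.arcsin ((a - b) / (a + b)))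
noncomputable def Tmean (a b : ℝ) : ℝ := (a - b) / (2 * Real.arctan ((a - b) / (a + b)))

/-!
Put `t = |a - b| / (a + b) ∈ (0, 1)`. Then `H = A (1 - t²)` and `P = A t / arcsin t`, so comparing
`γ A + (1 - γ) H` with `P` amounts to comparing `arcsin t` with `t / (1 - c t²)`, where `c = 1 - γ`.
The derivative of the gap `x / (1 - c x²) - arcsin x` has the sign of a cubic in `x²` that, for
`0 < c < 1`, decreases from `6c - 1` to `-(1 - c)⁴`. For `c = 1/6` the gap therefore decreases from
`0`; for `1/6 < c < 1` it first increases and then decreases, and `c = 1 - 2/π` makes it vanish at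
both ends of `[0, 1]`. Sharpness: `t / arcsin t → 2/π` as `t → 1`, and for `c > 1/6` the gap is
positive near `0`.
-/

open Set Filter Topology

noncomputable def arcsinGap (c x : ℝ) : ℝ := x / (1 - c * x ^ 2) - arcsin x

/-- `(1 + c u)² (1 - u) - (1 - c u)⁴ = u * arcsinGapCubic c u`. -/
def arcsinGapCubic (c u : ℝ) : ℝ :=
  (6 * c - 1) - (5 * c ^ 2 + 2 * c) * u + c ^ 2 * (4 * c - 1) * u ^ 2 - c ^ 4 * u ^ 3

section

variable {c : ℝ}

lemma arcsinGapCubic_zero (c : ℝ) : arcsinGapCubic c 0 = 6 * c - 1 := by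
  simp [arcsinGapCubic]

lemma arcsinGapCubic_one (c : ℝ) : arcsinGapCubic c 1 = -(1 - c) ^ 4 := by
  unfold arcsinGapCubic; ring

lemma strictAntiOn_arcsinGapCubic (hc0 : 0 < c) (hc1 : c < 1) :
    StrictAntiOn (arcsinGapCubic c) (Icc 0 1) := by
  rintro u ⟨hu0, hu1⟩ v ⟨hv0, hv1⟩ huv
  have hslope : 0 < (5 * c ^ 2 + 2 * c) - c ^ 2 * (4 * c - 1) * (u + v)
      + c ^ 4 * (u ^ 2 + u * v + v ^ 2) := by
    have hquart : 0 ≤ c ^ 4 * (u ^ 2 + u * v + v ^ 2) := by positivity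
    rcases le_total (4 * c - 1) 0 with h | h
    · nlinarith [mul_nonpos_of_nonpos_of_nonneg (mul_nonpos_of_nonneg_of_nonpos (sq_nonneg c) h)
        (add_nonneg hu0 hv0)]
    · nlinarith [mul_le_mul_of_nonneg_left (add_le_add hu1 hv1) (mul_nonneg (sq_nonneg c) h)]
  have hdiff : arcsinGapCubic c u - arcsinGapCubic c v = (v - u) * ((5 * c ^ 2 + 2 * c)
      - c ^ 2 * (4 * c - 1) * (u + v) + c ^ 4 * (u ^ 2 + u * v + v ^ 2)) := by
    unfold arcsinGapCubic; ring
  nlinarith [mul_pos (sub_pos.2 huv) hslope]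

lemma one_sub_mul_sq_pos (hc1 : c < 1) {x : ℝ} (hx : x ^ 2 ≤ 1) :
    0 < 1 - c * x ^ 2 := by
  rcases le_total c 0 with hc | hc <;> nlinarith [sq_nonneg x]

lemma arcsinGap_zero (c : ℝ) : arcsinGap c 0 = 0 := by
  simp [arcsinGap]

lemma hasDerivAt_arcsinGap {x : ℝ} (hx : x ∈ Ioo (-1) 1) (hcx : 1 - c * x ^ 2 ≠ 0) :
    HasDerivAt (arcsinGap c) ((1 + c * x ^ 2) / (1 - c * x ^ 2) ^ 2 - 1 / √(1 - x ^ 2)) x := by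
  have hden : HasDerivAt (fun y => 1 - c * y ^ 2) (-(c * (2 * x))) x := by
    simpa using ((hasDerivAt_pow 2 x).const_mul c).const_sub 1
  have hquot := ((hasDerivAt_id x).div hden hcx).sub
    (hasDerivAt_arcsin hx.1.ne' hx.2.ne)
  exact hquot.congr_deriv (by simp only [id]; ring)

lemma continuousOn_arcsinGap (hc1 : c < 1) :
    ContinuousOn (arcsinGap c) (Icc 0 1) := by
  refine (continuousOn_id.div (by fun_prop) fun x hx => ?_).sub continuous_arcsin.continuousOn
  exact (one_sub_mul_sq_pos hc1 (by nlinarith [hx.1, hx.2])).ne'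

lemma sq_sub_sq_eq_mul_arcsinGapCubic {x : ℝ} (hx : x ∈ Ioo 0 1) :
    ((1 + c * x ^ 2) * √(1 - x ^ 2)) ^ 2 - ((1 - c * x ^ 2) ^ 2) ^ 2
      = x ^ 2 * arcsinGapCubic c (x ^ 2) := by
  rw [mul_pow, sq_sqrt (by nlinarith [hx.1, hx.2])]
  unfold arcsinGapCubic; ring

lemma deriv_arcsinGap_pos_iff (hc0 : 0 ≤ c) (hc1 : c < 1) {x : ℝ} (hx : x ∈ Ioo 0 1) :
    0 < deriv (arcsinGap c) x ↔ 0 < arcsinGapCubic c (x ^ 2) := by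
  have hx2 : x ^ 2 < 1 := by nlinarith [hx.1, hx.2]
  have hden := one_sub_mul_sq_pos hc1 hx2.le
  have hroot : 0 < √(1 - x ^ 2) := sqrt_pos.2 (by linarith)
  rw [(hasDerivAt_arcsinGap ⟨by linarith [hx.1], hx.2⟩ hden.ne').deriv, sub_pos,
    div_lt_div_iff₀ hroot (by positivity), one_mul,
    ← pow_lt_pow_iff_left₀ (by positivity) (by positivity) two_ne_zero, ← sub_pos,
    sq_sub_sq_eq_mul_arcsinGapCubic hx, mul_pos_iff_of_pos_left (pow_pos hx.1 2)]

lemma deriv_arcsinGap_neg_iff (hc0 : 0 ≤ c) (hc1 : c < 1) {x : ℝ} (hx : x ∈ Ioo 0 1) :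
    deriv (arcsinGap c) x < 0 ↔ arcsinGapCubic c (x ^ 2) < 0 := by
  have hx2 : x ^ 2 < 1 := by nlinarith [hx.1, hx.2]
  have hden := one_sub_mul_sq_pos hc1 hx2.le
  have hroot : 0 < √(1 - x ^ 2) := sqrt_pos.2 (by linarith)
  rw [(hasDerivAt_arcsinGap ⟨by linarith [hx.1], hx.2⟩ hden.ne').deriv, sub_neg,
    div_lt_div_iff₀ (by positivity) hroot, one_mul,
    ← pow_lt_pow_iff_left₀ (by positivity) (by positivity) two_ne_zero, ← sub_neg,
    sq_sub_sq_eq_mul_arcsinGapCubic hx]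
  constructor <;> intro h <;> nlinarith [pow_pos hx.1 2]

lemma strictMonoOn_arcsinGap (hc0 : 0 ≤ c) (hc1 : c < 1) {x₀ x₁ : ℝ} (h₀ : 0 ≤ x₀) (h₁ : x₁ ≤ 1)
    (hcubic : ∀ x ∈ Ioo x₀ x₁, 0 < arcsinGapCubic c (x ^ 2)) :
    StrictMonoOn (arcsinGap c) (Icc x₀ x₁) := by
  refine strictMonoOn_of_deriv_pos (convex_Icc x₀ x₁)
    ((continuousOn_arcsinGap hc1).mono (Icc_subset_Icc h₀ h₁)) fun x hx => ?_
  rw [interior_Icc] at hx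
  exact (deriv_arcsinGap_pos_iff hc0 hc1 ⟨h₀.trans_lt hx.1, hx.2.trans_le h₁⟩).2 (hcubic x hx)

lemma strictAntiOn_arcsinGap (hc0 : 0 ≤ c) (hc1 : c < 1) {x₀ x₁ : ℝ} (h₀ : 0 ≤ x₀) (h₁ : x₁ ≤ 1)
    (hcubic : ∀ x ∈ Ioo x₀ x₁, arcsinGapCubic c (x ^ 2) < 0) :
    StrictAntiOn (arcsinGap c) (Icc x₀ x₁) := by
  refine strictAntiOn_of_deriv_neg (convex_Icc x₀ x₁)
    ((continuousOn_arcsinGap hc1).mono (Icc_subset_Icc h₀ h₁)) fun x hx => ?_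
  rw [interior_Icc] at hx
  exact (deriv_arcsinGap_neg_iff hc0 hc1 ⟨h₀.trans_lt hx.1, hx.2.trans_le h₁⟩).2 (hcubic x hx)

lemma exists_strictMonoOn_strictAntiOn_arcsinGap (hc0 : 1 / 6 < c) (hc1 : c < 1) :
    ∃ x₀ ∈ Ioo (0 : ℝ) 1,
      StrictMonoOn (arcsinGap c) (Icc 0 x₀) ∧ StrictAntiOn (arcsinGap c) (Icc x₀ 1) := by
  set q : ℝ → ℝ := fun x => arcsinGapCubic c (x ^ 2)
  have hq : StrictAntiOn q (Icc 0 1) := fun x hx y hy hxy =>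
    strictAntiOn_arcsinGapCubic (by linarith) hc1 ⟨sq_nonneg x, by nlinarith [hx.1, hx.2]⟩
      ⟨sq_nonneg y, by nlinarith [hy.1, hy.2]⟩ (pow_lt_pow_left₀ hxy hx.1 two_ne_zero)
  have hq_cont : ContinuousOn q (Icc 0 1) := by
    unfold q arcsinGapCubic; fun_prop
  have hsign : (0 : ℝ) ∈ Ioo (q 1) (q 0) := by
    simp only [q, mem_Ioo, one_pow, arcsinGapCubic_one, ne_eq, OfNat.ofNat_ne_zero,
      not_false_eq_true, zero_pow, arcsinGapCubic_zero]
    exact ⟨by linarith [pow_pos (sub_pos.2 hc1) 4], by linarith⟩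
  obtain ⟨x₀, hx₀, hqx₀⟩ := intermediate_value_Ioo' zero_le_one hq_cont hsign
  refine ⟨x₀, hx₀, strictMonoOn_arcsinGap (by linarith) hc1 le_rfl hx₀.2.le fun x hx => ?_,
    strictAntiOn_arcsinGap (by linarith) hc1 hx₀.1.le le_rfl fun x hx => ?_⟩
  · rw [← hqx₀]
    exact hq ⟨hx.1.le, hx.2.le.trans hx₀.2.le⟩ ⟨hx₀.1.le, hx₀.2.le⟩ hx.2
  · rw [← hqx₀]
    exact hq ⟨hx₀.1.le, hx₀.2.le⟩ ⟨(hx₀.1.trans hx.1).le, hx.2.le⟩ hx.1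

end

section

variable {c t : ℝ}

lemma one_sub_mul_sq_lt_div_arcsin_iff (hc1 : c < 1) (ht : t ∈ Ioo 0 1) :
    1 - c * t ^ 2 < t / arcsin t ↔ 0 < arcsinGap c t := by
  have hden := one_sub_mul_sq_pos hc1 (by nlinarith [ht.1, ht.2] : t ^ 2 ≤ 1)
  rw [lt_div_iff₀ (arcsin_pos.2 ht.1), arcsinGap, sub_pos, lt_div_iff₀ hden, mul_comm]

lemma div_arcsin_lt_one_sub_mul_sq_iff (hc1 : c < 1) (ht : t ∈ Ioo 0 1) :
    t / arcsin t < 1 - c * t ^ 2 ↔ arcsinGap c t < 0 := by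
  have hden := one_sub_mul_sq_pos hc1 (by nlinarith [ht.1, ht.2] : t ^ 2 ≤ 1)
  rw [div_lt_iff₀ (arcsin_pos.2 ht.1), arcsinGap, sub_neg, div_lt_iff₀ hden, mul_comm]

lemma one_sub_mul_sq_lt_div_arcsin (ht : t ∈ Ioo 0 1) :
    1 - (1 - 2 / π) * t ^ 2 < t / arcsin t := by
  have hc0 : 1 / 6 < 1 - 2 / π := by
    rw [lt_sub_comm, div_lt_iff₀ pi_pos]; linarith [pi_gt_three]
  have hc1 : 1 - 2 / π < 1 := by linarith [div_pos two_pos pi_pos]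
  have hgap_one : arcsinGap (1 - 2 / π) 1 = 0 := by
    rw [arcsinGap, arcsin_one]; field_simp; ring
  obtain ⟨x₀, hx₀, hmono, hanti⟩ := exists_strictMonoOn_strictAntiOn_arcsinGap hc0 hc1
  rw [one_sub_mul_sq_lt_div_arcsin_iff hc1 ht]
  rcases le_or_gt t x₀ with htx₀ | htx₀
  · simpa [arcsinGap_zero] using hmono ⟨le_rfl, hx₀.1.le⟩ ⟨ht.1.le, htx₀⟩ ht.1
  · simpa [hgap_one] using hanti ⟨htx₀.le, ht.2.le⟩ ⟨hx₀.2.le, le_rfl⟩ ht.2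

lemma div_arcsin_lt_one_sub_mul_sq (ht : t ∈ Ioo 0 1) :
    t / arcsin t < 1 - 1 / 6 * t ^ 2 := by
  have hcubic : ∀ x ∈ Ioo (0 : ℝ) 1, arcsinGapCubic (1 / 6) (x ^ 2) < 0 := fun x hx => by
    have := strictAntiOn_arcsinGapCubic (c := 1 / 6) (by norm_num) (by norm_num)
      ⟨le_rfl, zero_le_one⟩ ⟨sq_nonneg x, by nlinarith [hx.1, hx.2]⟩ (pow_pos hx.1 2)
    simpa [arcsinGapCubic_zero] using this
  rw [div_arcsin_lt_one_sub_mul_sq_iff (by norm_num) ht]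
  simpa [arcsinGap_zero] using strictAntiOn_arcsinGap (by norm_num) (by norm_num) le_rfl le_rfl
    hcubic ⟨le_rfl, zero_le_one⟩ ⟨ht.1.le, ht.2.le⟩ ht.1

lemma exists_one_sub_mul_sq_lt_div_arcsin (hc0 : 1 / 6 < c) (hc1 : c < 1) :
    ∃ t ∈ Ioo (0 : ℝ) 1, 1 - c * t ^ 2 < t / arcsin t := by
  obtain ⟨x₀, hx₀, hmono, -⟩ := exists_strictMonoOn_strictAntiOn_arcsinGap hc0 hc1
  refine ⟨x₀, hx₀, (one_sub_mul_sq_lt_div_arcsin_iff hc1 hx₀).2 ?_⟩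
  simpa [arcsinGap_zero] using hmono ⟨le_rfl, hx₀.1.le⟩ ⟨hx₀.1.le, le_rfl⟩ hx₀.1

end

lemma forall_one_sub_mul_sq_lt_div_arcsin_iff (α : ℝ) :
    (∀ t ∈ Ioo (0 : ℝ) 1, 1 - (1 - α) * t ^ 2 < t / arcsin t) ↔ α ≤ 2 / π := by
  refine ⟨fun h => ?_, fun hα t ht => ?_⟩
  · have hlhs : Tendsto (fun t : ℝ => 1 - (1 - α) * t ^ 2) (𝓝[<] 1) (𝓝 α) := by
      have : Continuous fun t : ℝ => 1 - (1 - α) * t ^ 2 := by fun_prop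
      simpa using (this.tendsto 1).mono_left nhdsWithin_le_nhds
    have hrhs : Tendsto (fun t => t / arcsin t) (𝓝[<] 1) (𝓝 (2 / π)) := by
      have : ContinuousAt (fun t => t / arcsin t) 1 :=
        continuousAt_id.div continuous_arcsin.continuousAt (by rw [arcsin_one]; positivity)
      simpa [arcsin_one] using this.tendsto.mono_left nhdsWithin_le_nhds
    exact le_of_tendsto_of_tendsto hlhs hrhs
      (eventually_of_mem (Ioo_mem_nhdsLT zero_lt_one) fun t ht => (h t ht).le)
  · calc 1 - (1 - α) * t ^ 2 ≤ 1 - (1 - 2 / π) * t ^ 2 := by gcongr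
      _ < t / arcsin t := one_sub_mul_sq_lt_div_arcsin ht

lemma forall_div_arcsin_lt_one_sub_mul_sq_iff (β : ℝ) :
    (∀ t ∈ Ioo (0 : ℝ) 1, t / arcsin t < 1 - (1 - β) * t ^ 2) ↔ 5 / 6 ≤ β := by
  refine ⟨fun h => ?_, fun hβ t ht => ?_⟩
  · by_contra! hβ
    obtain ⟨t, ht, hlt⟩ := exists_one_sub_mul_sq_lt_div_arcsin (c := min (1 - β) (1 / 2))
      (lt_min (by linarith) (by norm_num)) ((min_le_right _ _).trans_lt (by norm_num))
    have : 1 - (1 - β) * t ^ 2 ≤ 1 - min (1 - β) (1 / 2) * t ^ 2 := by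
      gcongr; exact min_le_left _ _
    linarith [h t ht]
  · calc t / arcsin t < 1 - 1 / 6 * t ^ 2 := div_arcsin_lt_one_sub_mul_sq ht
      _ ≤ 1 - (1 - β) * t ^ 2 := by gcongr; linarith

lemma Amean_one_add_one_sub (t : ℝ) : Amean (1 + t) (1 - t) = 1 := by
  unfold Amean; ring

lemma Hmean_one_add_one_sub (t : ℝ) : Hmean (1 + t) (1 - t) = 1 - t ^ 2 := by
  unfold Hmean; ring

lemma Pmean_one_add_one_sub (t : ℝ) : Pmean (1 + t) (1 - t) = t / arcsin t := by
  unfold Pmean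
  rw [show (1 + t - (1 - t)) / (1 + t + (1 - t)) = t by ring, show 1 + t - (1 - t) = 2 * t by ring,
    mul_div_mul_left _ _ two_ne_zero]

lemma abs_div_arcsin_abs (s : ℝ) : |s| / arcsin |s| = s / arcsin s := by
  rcases abs_choice s with h | h <;> rw [h]
  rw [arcsin_neg, neg_div_neg_eq]

lemma exists_Hmean_Pmean_eq {a b : ℝ} (ha : 0 < a) (hb : 0 < b) (hab : a ≠ b) :
    ∃ t ∈ Ioo (0 : ℝ) 1,
      Hmean a b = Amean a b * (1 - t ^ 2) ∧ Pmean a b = Amean a b * (t / arcsin t) := by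
  have hsum : 0 < a + b := by linarith
  refine ⟨|(a - b) / (a + b)|, ⟨abs_pos.2 (div_ne_zero (sub_ne_zero.2 hab) hsum.ne'), ?_⟩, ?_, ?_⟩
  · rw [abs_div, abs_of_pos hsum, div_lt_one hsum, abs_sub_lt_iff]
    constructor <;> linarith
  · rw [sq_abs]; unfold Hmean Amean; field_simp; ring
  · rw [abs_div_arcsin_abs]; unfold Pmean Amean; field_simp

lemma forall_mix_lt_Pmean_iff (γ : ℝ) :
    (∀ a b : ℝ, 0 < a → 0 < b → a ≠ b → γ * Amean a b + (1 - γ) * Hmean a b < Pmean a b) ↔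
      ∀ t ∈ Ioo (0 : ℝ) 1, 1 - (1 - γ) * t ^ 2 < t / arcsin t := by
  refine ⟨fun h t ht => ?_, fun h a b ha hb hab => ?_⟩
  · have := h (1 + t) (1 - t) (by linarith [ht.1]) (by linarith [ht.2]) (by linarith [ht.1])
    rw [Amean_one_add_one_sub, Hmean_one_add_one_sub, Pmean_one_add_one_sub] at this
    linarith
  · obtain ⟨t, ht, hH, hP⟩ := exists_Hmean_Pmean_eq ha hb hab
    have hA : 0 < Amean a b := by unfold Amean; linarith
    rw [hH, hP]
    linarith [mul_lt_mul_of_pos_left (h t ht) hA]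

lemma forall_Pmean_lt_mix_iff (γ : ℝ) :
    (∀ a b : ℝ, 0 < a → 0 < b → a ≠ b → Pmean a b < γ * Amean a b + (1 - γ) * Hmean a b) ↔
      ∀ t ∈ Ioo (0 : ℝ) 1, t / arcsin t < 1 - (1 - γ) * t ^ 2 := by
  refine ⟨fun h t ht => ?_, fun h a b ha hb hab => ?_⟩
  · have := h (1 + t) (1 - t) (by linarith [ht.1]) (by linarith [ht.2]) (by linarith [ht.1])
    rw [Amean_one_add_one_sub, Hmean_one_add_one_sub, Pmean_one_add_one_sub] at this
    linarith
  · obtain ⟨t, ht, hH, hP⟩ := exists_Hmean_Pmean_eq ha hb hab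
    have hA : 0 < Amean a b := by unfold Amean; linarith
    rw [hH, hP]
    linarith [mul_lt_mul_of_pos_left (h t ht) hA]

theorem sharp_stmt_11 :
    (∀ a b : ℝ, 0 < a → 0 < b → a ≠ b →
        (2 / Real.pi) * Amean a b + (1 - (2 / Real.pi)) * Hmean a b < Pmean a b ∧
        Pmean a b < (5 / 6) * Amean a b + (1 - (5 / 6)) * Hmean a b) ∧
    (∀ α : ℝ, (∀ a b : ℝ, 0 < a → 0 < b → a ≠ b →
        α * Amean a b + (1 - α) * Hmean a b < Pmean a b) ↔ α ≤ (2 / Real.pi)) ∧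
    (∀ β : ℝ, (∀ a b : ℝ, 0 < a → 0 < b → a ≠ b →
        Pmean a b < β * Amean a b + (1 - β) * Hmean a b) ↔ β ≥ (5 / 6)) := by
  have hα (α : ℝ) := (forall_mix_lt_Pmean_iff α).trans (forall_one_sub_mul_sq_lt_div_arcsin_iff α)
  have hβ (β : ℝ) := (forall_Pmean_lt_mix_iff β).trans (forall_div_arcsin_lt_one_sub_mul_sq_iff β)
  exact ⟨fun a b ha hb hab => ⟨(hα _).2 le_rfl a b ha hb hab, (hβ _).2 le_rfl a b ha hb hab⟩,
    hα, hβ⟩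
end

section
/- For all a, b > 0 with a ≠ b, α·S(a,b) + (1-α)·A(a,b) < T(a,b) < β·S(a,b) + (1-β)·A(a,b) holds with α = (4-π)/((√2 - 1)π) and β = 2/3, and these constants are best possible. -/
open Real

/-!
Write `a = c (1 + tan θ)`, `b = c (1 - tan θ)` with `c > 0`, `0 < θ < π / 4`. Then `A = c`,
`S = c / cos θ` and `T = c tan θ / θ`, so `p S + (1 - p) A < T` if and only if
`gap p θ = θ (p + (1 - p) cos θ) - sin θ < 0`, and `gap p θ` is increasing in `p`.

Since `1 - cos θ = sin θ tan (θ / 2)`, the derivative of `gap p` is `sin θ · gapFactor p θ` with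
`gapFactor p θ = p tan (θ / 2) - (1 - p) θ`. For `p = 2 / 3` the factor is positive as
`tan x > x`, which gives the Cusa–Huygens inequality `gap (2 / 3) θ > 0`. For `p = α > 0` the
factor is strictly convex and vanishes at `0`, so it changes sign at most once, from `-` to `+`;
as `α` is chosen to make `gap α (π / 4) = 0`, `gap α` is negative on `(0, π / 4)`.
Sharpness: for `p > α` one has `gap p (π / 4) > 0`, and for `p < 2 / 3` one has
`gap p θ = (3 p - 2) θ³ / 6 + O(θ⁵) < 0` near `0`.
-/

open Set Filter Topology

theorem StrictConvexOn.pos_of_nonneg_of_lt {s : Set ℝ} {f : ℝ → ℝ}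
    (hf : StrictConvexOn ℝ s f) (h0 : 0 ∈ s) (hf0 : f 0 = 0) {y z : ℝ} (hy : y ∈ s) (hz : z ∈ s)
    (hy0 : 0 < y) (hyz : y < z) (hfy : 0 ≤ f y) : 0 < f z := by
  have hslope := hf.secant_strict_mono h0 hy hz hy0.ne' (hy0.trans hyz).ne' hyz
  simp only [hf0, sub_zero] at hslope
  exact (div_pos_iff_of_pos_right (hy0.trans hyz)).1 ((div_nonneg hfy hy0.le).trans_lt hslope)

theorem neg_of_hasDerivAt_of_sign_change {f f' : ℝ → ℝ} {a b x : ℝ}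
    (hf : ContinuousOn f (Icc a b)) (hderiv : ∀ y ∈ Ioo a b, HasDerivAt f (f' y) y)
    (ha : f a = 0) (hb : f b = 0)
    (hsign : ∀ y ∈ Ioo a b, ∀ z ∈ Ioo a b, y < z → 0 ≤ f' y → 0 < f' z) (hx : x ∈ Ioo a b) :
    f x < 0 := by
  rcases le_or_gt 0 (f' x) with hx' | hx'
  · have hmono : StrictMonoOn f (Icc x b) := by
      refine strictMonoOn_of_hasDerivWithinAt_pos (f' := f') (convex_Icc x b)
        (hf.mono (Icc_subset_Icc_left hx.1.le)) (fun y hy => ?_) (fun y hy => ?_) <;>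
        rw [interior_Icc] at hy
      · exact (hderiv y ⟨hx.1.trans hy.1, hy.2⟩).hasDerivWithinAt
      · exact hsign x hx y ⟨hx.1.trans hy.1, hy.2⟩ hy.1 hx'
    simpa [hb] using hmono (left_mem_Icc.2 hx.2.le) (right_mem_Icc.2 hx.2.le) hx.2
  · have hanti : StrictAntiOn f (Icc a x) := by
      refine strictAntiOn_of_hasDerivWithinAt_neg (f' := f') (convex_Icc a x)
        (hf.mono (Icc_subset_Icc_right hx.2.le)) (fun y hy => ?_) (fun y hy => ?_) <;>
        rw [interior_Icc] at hy
      · exact (hderiv y ⟨hy.1, hy.2.trans hx.2⟩).hasDerivWithinAt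
      · by_contra! hy'
        exact hx'.not_gt (hsign y ⟨hy.1, hy.2.trans hx.2⟩ x hx hy.2 hy')
    simpa [ha] using hanti (left_mem_Icc.2 hx.1.le) (right_mem_Icc.2 hx.1.le) hx.1

theorem Real.one_sub_cos_eq_sin_mul_tan_half {θ : ℝ} (hθ : cos (θ / 2) ≠ 0) :
    1 - cos θ = sin θ * tan (θ / 2) := by
  have hsin : sin θ = 2 * sin (θ / 2) * cos (θ / 2) := by
    rw [← sin_two_mul, mul_div_cancel₀ θ two_ne_zero]
  have hcos : cos θ = 1 - 2 * sin (θ / 2) ^ 2 := by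
    rw [← cos_two_mul_eq_one_sub, mul_div_cancel₀ θ two_ne_zero]
  rw [hsin, hcos, tan_eq_sin_div_cos]
  field_simp
  ring

theorem Real.cos_half_pos {θ : ℝ} (hθ : θ ∈ Ioo (-π) π) : 0 < cos (θ / 2) :=
  cos_pos_of_mem_Ioo ⟨by linarith [hθ.1], by linarith [hθ.2]⟩

namespace Seiffert

noncomputable def gap (p θ : ℝ) : ℝ := θ * (p + (1 - p) * cos θ) - sin θ

noncomputable def gapFactor (p θ : ℝ) : ℝ := p * tan (θ / 2) - (1 - p) * θ

noncomputable def alpha : ℝ := (4 - π) / ((√2 - 1) * π)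

variable {p θ : ℝ}

theorem gap_zero (p : ℝ) : gap p 0 = 0 := by simp [gap]

theorem continuous_gap (p : ℝ) : Continuous (gap p) := by unfold gap; fun_prop

theorem gap_strictMono (hθ : θ ∈ Ioc 0 π) : StrictMono (gap · θ) := by
  intro p q hpq
  have hcos : cos θ < 1 := by
    simpa using cos_lt_cos_of_nonneg_of_le_pi le_rfl hθ.2 hθ.1
  have hdiff : gap q θ - gap p θ = (q - p) * (θ * (1 - cos θ)) := by unfold gap; ring
  have : 0 < (q - p) * (θ * (1 - cos θ)) :=
    mul_pos (sub_pos.2 hpq) (mul_pos hθ.1 (sub_pos.2 hcos))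
  linarith

theorem hasDerivAt_gap (p : ℝ) (hθ : cos (θ / 2) ≠ 0) :
    HasDerivAt (gap p) (sin θ * gapFactor p θ) θ := by
  have h : HasDerivAt (fun x => x * (p + (1 - p) * cos x) - sin x)
      (1 * (p + (1 - p) * cos θ) + θ * ((1 - p) * -sin θ) - cos θ) θ :=
    ((hasDerivAt_id' θ).mul (((hasDerivAt_cos θ).const_mul (1 - p)).const_add p)).sub
      (hasDerivAt_sin θ)
  refine h.congr_deriv ?_
  rw [gapFactor]
  linear_combination p * one_sub_cos_eq_sin_mul_tan_half hθ

theorem hasDerivAt_gapFactor (p : ℝ) (hθ : cos (θ / 2) ≠ 0) :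
    HasDerivAt (gapFactor p) (p / (2 * cos (θ / 2) ^ 2) - (1 - p)) θ := by
  have h : HasDerivAt (fun x => p * tan (x / 2) - (1 - p) * x)
      (p * (1 / cos (θ / 2) ^ 2 * (1 / 2)) - (1 - p) * 1) θ :=
    (((hasDerivAt_tan hθ).comp θ ((hasDerivAt_id' θ).div_const 2)).const_mul p).sub
      ((hasDerivAt_id' θ).const_mul (1 - p))
  refine h.congr_deriv ?_
  field_simp

theorem strictConvexOn_gapFactor (hp : 0 < p) : StrictConvexOn ℝ (Ico 0 π) (gapFactor p) := by
  have hcos {y : ℝ} (hy : y ∈ Ico 0 π) : 0 < cos (y / 2) :=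
    cos_half_pos ⟨by linarith [pi_pos, hy.1], hy.2⟩
  refine StrictMonoOn.strictConvexOn_of_deriv (convex_Ico 0 π)
    (fun y hy => (hasDerivAt_gapFactor p (hcos hy).ne').continuousAt.continuousWithinAt) ?_
  rw [interior_Ico]
  intro y hy z hz hyz
  rw [(hasDerivAt_gapFactor p (hcos (Ioo_subset_Ico_self hy)).ne').deriv,
    (hasDerivAt_gapFactor p (hcos (Ioo_subset_Ico_self hz)).ne').deriv]
  have hcz := hcos (Ioo_subset_Ico_self hz)
  have hczy : cos (z / 2) < cos (y / 2) :=
    cos_lt_cos_of_nonneg_of_le_pi (by linarith [hy.1]) (by linarith [hz.2, pi_pos]) (by linarith)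
  gcongr

theorem gap_alpha_pi_div_four : gap alpha (π / 4) = 0 := by
  have hs : √2 ^ 2 = 2 := sq_sqrt zero_le_two
  have hs1 : √2 - 1 ≠ 0 := by nlinarith
  rw [gap, alpha, sin_pi_div_four, cos_pi_div_four]
  field_simp
  linear_combination (π - 4) * hs

theorem alpha_pos : 0 < alpha := by
  have hs : 1 < √2 := by rw [lt_sqrt zero_le_one]; norm_num
  exact div_pos (by linarith [pi_lt_four]) (mul_pos (by linarith) pi_pos)

theorem gap_alpha_neg (hθ : θ ∈ Ioo 0 (π / 4)) : gap alpha θ < 0 := by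
  have hπ := pi_pos
  have hsub {y : ℝ} (hy : y ∈ Ioo 0 (π / 4)) : y ∈ Ico 0 π :=
    ⟨hy.1.le, by linarith [hy.2]⟩
  refine neg_of_hasDerivAt_of_sign_change (continuous_gap _).continuousOn
    (fun y hy => hasDerivAt_gap _ (cos_half_pos ⟨by linarith [hy.1], by linarith [hy.2]⟩).ne')
    (gap_zero _) gap_alpha_pi_div_four ?_ hθ
  intro y hy z hz hyz hgy
  have hsin {x : ℝ} (hx : x ∈ Ioo 0 (π / 4)) : 0 < sin x :=
    sin_pos_of_pos_of_lt_pi hx.1 (by linarith [hx.2])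
  have hfy : 0 ≤ gapFactor alpha y := nonneg_of_mul_nonneg_right hgy (hsin hy)
  exact mul_pos (hsin hz) ((strictConvexOn_gapFactor alpha_pos).pos_of_nonneg_of_lt
    ⟨le_rfl, hπ⟩ (by simp [gapFactor]) (hsub hy) (hsub hz) hy.1 hyz hfy)

theorem gap_two_thirds_pos (hθ : θ ∈ Ioo 0 π) : 0 < gap (2 / 3) θ := by
  have hmono : StrictMonoOn (gap (2 / 3)) (Ico 0 π) := by
    refine strictMonoOn_of_hasDerivWithinAt_pos (f' := fun y => sin y * gapFactor (2 / 3) y)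
      (convex_Ico 0 π) (continuous_gap _).continuousOn
      (fun y hy => ?_) (fun y hy => ?_) <;> rw [interior_Ico] at hy
    · have hcos := cos_half_pos ⟨by linarith [hy.1, pi_pos], hy.2⟩
      exact (hasDerivAt_gap _ hcos.ne').hasDerivWithinAt
    · have htan : y / 2 < tan (y / 2) := lt_tan (by linarith [hy.1]) (by linarith [hy.2])
      refine mul_pos (sin_pos_of_pos_of_lt_pi hy.1 hy.2) ?_
      rw [gapFactor]
      linarith
  simpa [gap_zero] using hmono ⟨le_rfl, pi_pos⟩ (Ioo_subset_Ico_self hθ) hθ.1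

theorem eventually_gap_neg (hp : p < 2 / 3) : ∀ᶠ θ in 𝓝[>] 0, gap p θ < 0 := by
  have hquad : ∀ᶠ θ in 𝓝 (0 : ℝ), (3 * p - 2) / 6 + 5 * (1 - p) * θ ^ 2 / 96 < 0 := by
    have hcont : Continuous fun θ : ℝ => (3 * p - 2) / 6 + 5 * (1 - p) * θ ^ 2 / 96 := by
      fun_prop
    exact hcont.continuousAt.eventually_lt continuousAt_const (by linarith)
  filter_upwards [self_mem_nhdsWithin, nhdsWithin_le_nhds (eventually_le_nhds one_pos),
    nhdsWithin_le_nhds hquad] with θ (hθ : 0 < θ) hθ1 hθq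
  have hsin : θ - θ ^ 3 / 6 < sin θ := sin_gt_sub_cube hθ
  have hcos : cos θ ≤ 1 - θ ^ 2 / 2 + θ ^ 4 * (5 / 96) := by
    have := (abs_le.1 (cos_bound (x := θ) (by rwa [abs_of_pos hθ]))).2
    rw [abs_of_pos hθ] at this
    linarith
  have hp1 : 0 ≤ 1 - p := by linarith
  have hbound : gap p θ < θ ^ 3 * ((3 * p - 2) / 6 + 5 * (1 - p) * θ ^ 2 / 96) := by
    unfold gap
    nlinarith [mul_le_mul_of_nonneg_left hcos (mul_nonneg hθ.le hp1)]
  exact hbound.trans (mul_neg_of_pos_of_neg (pow_pos hθ 3) hθq)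

theorem forall_gap_neg_iff : (∀ θ ∈ Ioo 0 (π / 4), gap p θ < 0) ↔ p ≤ alpha := by
  have hπ := pi_pos
  have hmono {θ : ℝ} (hθ : θ ∈ Ioo 0 (π / 4)) : StrictMono (gap · θ) :=
    gap_strictMono ⟨hθ.1, by linarith [hθ.2]⟩
  refine ⟨fun h => ?_, fun hp θ hθ => ((hmono hθ).monotone hp).trans_lt (gap_alpha_neg hθ)⟩
  by_contra! hp
  have hpos : 0 < gap p (π / 4) :=
    gap_alpha_pi_div_four ▸ gap_strictMono ⟨by positivity, by linarith⟩ hp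
  have hnear : ∀ᶠ θ in 𝓝[<] (π / 4), 0 < gap p θ :=
    nhdsWithin_le_nhds (continuousAt_const.eventually_lt (continuous_gap p).continuousAt hpos)
  obtain ⟨θ, hθpos, hθ⟩ := (hnear.and (Ioo_mem_nhdsLT (by positivity))).exists
  exact (h θ hθ).not_gt hθpos

theorem forall_gap_pos_iff : (∀ θ ∈ Ioo 0 (π / 4), 0 < gap p θ) ↔ 2 / 3 ≤ p := by
  have hπ := pi_pos
  have hmono {θ : ℝ} (hθ : θ ∈ Ioo 0 (π / 4)) : StrictMono (gap · θ) :=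
    gap_strictMono ⟨hθ.1, by linarith [hθ.2]⟩
  refine ⟨fun h => ?_, fun hp θ hθ =>
    (gap_two_thirds_pos ⟨hθ.1, by linarith [hθ.2]⟩).trans_le ((hmono hθ).monotone hp)⟩
  by_contra! hp
  obtain ⟨θ, hθneg, hθ⟩ :=
    ((eventually_gap_neg hp).and (Ioo_mem_nhdsGT (by positivity : (0 : ℝ) < π / 4))).exists
  exact (h θ hθ).not_gt hθneg

end Seiffert

theorem Amean_comm (a b : ℝ) : Amean a b = Amean b a := by unfold Amean; ring

theorem Smean_comm (a b : ℝ) : Smean a b = Smean b a := by unfold Smean; ring_nf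

theorem Tmean_comm (a b : ℝ) : Tmean a b = Tmean b a := by
  unfold Tmean
  rw [← neg_sub b a, add_comm a b, neg_div (b + a) (b - a), arctan_neg, mul_neg, neg_div_neg_eq]

theorem exists_eq_mul_one_add_tan {a b : ℝ} (hb : 0 < b) (hba : b < a) :
    ∃ c > 0, ∃ θ ∈ Ioo 0 (π / 4), a = c * (1 + tan θ) ∧ b = c * (1 - tan θ) := by
  have hab : 0 < a + b := by linarith
  refine ⟨(a + b) / 2, by positivity, arctan ((a - b) / (a + b)), ⟨?_, ?_⟩, ?_, ?_⟩
  · exact arctan_pos.2 (div_pos (by linarith) hab)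
  · rw [← arctan_one]
    exact arctan_strictMono ((div_lt_one hab).2 (by linarith))
  all_goals rw [tan_arctan]; field_simp; ring

section TanParam

variable {c θ : ℝ}

theorem Amean_tan_param (c θ : ℝ) : Amean (c * (1 + tan θ)) (c * (1 - tan θ)) = c := by
  unfold Amean; ring

theorem Smean_tan_param (hc : 0 ≤ c) (hθ : 0 < cos θ) :
    Smean (c * (1 + tan θ)) (c * (1 - tan θ)) = c / cos θ := by
  rw [Smean, ← sqrt_sq (div_nonneg hc hθ.le), tan_eq_sin_div_cos]
  congr 1
  field_simp
  linear_combination 2 * c ^ 2 * sin_sq_add_cos_sq θ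

theorem Tmean_tan_param (hc : c ≠ 0) (hθ : θ ∈ Ioo (-(π / 2)) (π / 2)) :
    Tmean (c * (1 + tan θ)) (c * (1 - tan θ)) = c * tan θ / θ := by
  rw [Tmean, show c * (1 + tan θ) - c * (1 - tan θ) = 2 * (c * tan θ) by ring,
    show c * (1 + tan θ) + c * (1 - tan θ) = 2 * c by ring,
    mul_div_mul_left (c * tan θ) c two_ne_zero, mul_div_cancel_left₀ _ hc, arctan_tan hθ.1 hθ.2,
    mul_div_mul_left _ _ two_ne_zero]

variable {a b : ℝ}

theorem combo_sub_Tmean_eq_mul_gap (p : ℝ) (hc : 0 < c) (hθ : θ ∈ Ioo 0 (π / 2))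
    (ha : a = c * (1 + tan θ)) (hb : b = c * (1 - tan θ)) :
    p * Smean a b + (1 - p) * Amean a b - Tmean a b = c / (θ * cos θ) * Seiffert.gap p θ := by
  have hcos : 0 < cos θ := cos_pos_of_mem_Ioo ⟨by linarith [hθ.1, pi_pos], hθ.2⟩
  have hθ0 : θ ≠ 0 := hθ.1.ne'
  rw [ha, hb, Smean_tan_param hc.le hcos, Amean_tan_param,
    Tmean_tan_param hc.ne' ⟨by linarith [hθ.1, pi_pos], hθ.2⟩, Seiffert.gap, tan_eq_sin_div_cos]
  field_simp

theorem sign_combo_sub_Tmean (p : ℝ) (hc : 0 < c) (hθ : θ ∈ Ioo 0 (π / 2))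
    (ha : a = c * (1 + tan θ)) (hb : b = c * (1 - tan θ)) :
    SignType.sign (p * Smean a b + (1 - p) * Amean a b - Tmean a b) =
      SignType.sign (Seiffert.gap p θ) := by
  have hk : 0 < c / (θ * cos θ) :=
    div_pos hc (mul_pos hθ.1 (cos_pos_of_mem_Ioo ⟨by linarith [hθ.1, pi_pos], hθ.2⟩))
  rw [combo_sub_Tmean_eq_mul_gap p hc hθ ha hb, sign_mul, sign_pos hk, one_mul]

end TanParam

theorem forall_sign_combo_sub_Tmean_iff (p : ℝ) (s : SignType) :
    (∀ a b : ℝ, 0 < a → 0 < b → a ≠ b →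
      SignType.sign (p * Smean a b + (1 - p) * Amean a b - Tmean a b) = s) ↔
      ∀ θ ∈ Ioo 0 (π / 4), SignType.sign (Seiffert.gap p θ) = s := by
  have hsub {θ : ℝ} (hθ : θ ∈ Ioo 0 (π / 4)) : θ ∈ Ioo 0 (π / 2) :=
    ⟨hθ.1, by linarith [hθ.2, pi_pos]⟩
  refine ⟨fun h θ hθ => ?_, fun h a b ha hb hab => ?_⟩
  · have htan0 : 0 < tan θ := tan_pos_of_pos_of_lt_pi_div_two hθ.1 (hsub hθ).2
    have htan1 : tan θ < 1 := tan_pi_div_four ▸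
      tan_lt_tan_of_lt_of_lt_pi_div_two (by linarith [hθ.1, pi_pos]) (by linarith [pi_pos]) hθ.2
    rw [← sign_combo_sub_Tmean p one_pos (hsub hθ) rfl rfl]
    exact h _ _ (by linarith) (by linarith) (by linarith)
  · wlog hba : b < a generalizing a b
    · rw [Smean_comm, Amean_comm, Tmean_comm]
      exact this b a hb ha hab.symm (lt_of_le_of_ne (not_lt.1 hba) hab)
    obtain ⟨c, hc, θ, hθ, rfl, rfl⟩ := exists_eq_mul_one_add_tan hb hba
    rw [sign_combo_sub_Tmean p hc (hsub hθ) rfl rfl]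
    exact h θ hθ

theorem forall_combo_lt_Tmean_iff (p : ℝ) :
    (∀ a b : ℝ, 0 < a → 0 < b → a ≠ b → p * Smean a b + (1 - p) * Amean a b < Tmean a b) ↔
      ∀ θ ∈ Ioo 0 (π / 4), Seiffert.gap p θ < 0 := by
  simpa only [sign_eq_neg_one_iff, sub_neg] using forall_sign_combo_sub_Tmean_iff p (-1)

theorem forall_Tmean_lt_combo_iff (p : ℝ) :
    (∀ a b : ℝ, 0 < a → 0 < b → a ≠ b → Tmean a b < p * Smean a b + (1 - p) * Amean a b) ↔
      ∀ θ ∈ Ioo 0 (π / 4), 0 < Seiffert.gap p θ := by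
  simpa only [sign_eq_one_iff, sub_pos] using forall_sign_combo_sub_Tmean_iff p 1

theorem sharp_stmt_13 :
    (∀ a b : ℝ, 0 < a → 0 < b → a ≠ b →
        ((4 - Real.pi) / ((Real.sqrt 2 - 1) * Real.pi)) * Smean a b + (1 - ((4 - Real.pi) / ((Real.sqrt 2 - 1) * Real.pi))) * Amean a b < Tmean a b ∧
        Tmean a b < (2 / 3) * Smean a b + (1 - (2 / 3)) * Amean a b) ∧
    (∀ α : ℝ, (∀ a b : ℝ, 0 < a → 0 < b → a ≠ b →
        α * Smean a b + (1 - α) * Amean a b < Tmean a b) ↔ α ≤ ((4 - Real.pi) / ((Real.sqrt 2 - 1) * Real.pi))) ∧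
    (∀ β : ℝ, (∀ a b : ℝ, 0 < a → 0 < b → a ≠ b →
        Tmean a b < β * Smean a b + (1 - β) * Amean a b) ↔ β ≥ (2 / 3)) := by
  have lower (α : ℝ) := (forall_combo_lt_Tmean_iff α).trans Seiffert.forall_gap_neg_iff
  have upper (β : ℝ) := (forall_Tmean_lt_combo_iff β).trans Seiffert.forall_gap_pos_iff
  refine ⟨fun a b ha hb hab => ⟨?_, ?_⟩, lower, upper⟩
  · exact (lower _).2 le_rfl a b ha hb hab
  · exact (upper _).2 le_rfl a b ha hb hab
end

section
/- For all a, b > 0 with a ≠ b, (2/π)·C(a,b) + (1 - 2/π)·H(a,b) < T(a,b) < (2/3)·C(a,b) + (1/3)·H(a,b), and the constants 2/π and 2/3 are best possible. -/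
open Real

/-!
Put `s = (a + b) / 2` and `t = (a - b) / (a + b) ∈ (-1, 1)`. Then `C = s (1 + t²)`, `H = s (1 - t²)`
and `T = s · t / arctan t`, so `p C + (1 - p) H = s (1 + (2p - 1) t²)` and every claim becomes a
statement about the even function `t / arctan t` on `(0, 1)`.

The upper bound is the classical `arctan t > 3t / (3 + t²)`. For the lower bound, with
`c = 4/π - 1 < 1/3`, the function `t / (1 + c t²) - arctan t` vanishes at `0` and at `1`, and its
derivative `t² (1 - 3c - c (1 + c) t²) / …` changes sign once, so it is positive in between.
Sharpness: as `t → 1` the ratio `t / arctan t` tends to `4/π = 1 + (2 · 2/π - 1)`, and near `0`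
it is at least `1 + t²/3 - O(t⁴)` because `arctan t ≤ t - t³/3 + t⁵/5`.
-/

open Set Filter Topology

lemma mix_Cmean_Hmean_eq (p : ℝ) {a b : ℝ} (h : a + b ≠ 0) :
    p * Cmean a b + (1 - p) * Hmean a b =
      (a + b) / 2 * (1 + (2 * p - 1) * ((a - b) / (a + b)) ^ 2) := by
  unfold Cmean Hmean
  field_simp
  ring

lemma Tmean_eq {a b : ℝ} (h : a + b ≠ 0) :
    Tmean a b = (a + b) / 2 * ((a - b) / (a + b) / arctan ((a - b) / (a + b))) := by
  unfold Tmean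
  field_simp

lemma abs_div_arctan_abs (t : ℝ) : |t| / arctan |t| = t / arctan t := by
  rcases abs_choice t with h | h <;> rw [h]
  rw [arctan_neg, neg_div_neg_eq]

lemma mix_Cmean_Hmean_one_add_one_sub (p t : ℝ) :
    p * Cmean (1 + t) (1 - t) + (1 - p) * Hmean (1 + t) (1 - t) = 1 + (2 * p - 1) * t ^ 2 := by
  rw [mix_Cmean_Hmean_eq p (by norm_num)]
  ring

lemma Tmean_one_add_one_sub (t : ℝ) : Tmean (1 + t) (1 - t) = t / arctan t := by
  rw [Tmean_eq (by norm_num)]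
  ring_nf

lemma exists_mix_Cmean_Hmean_eq_and_Tmean_eq {a b : ℝ} (ha : 0 < a) (hb : 0 < b) (hab : a ≠ b) :
    ∃ s > 0, ∃ t ∈ Ioo (0 : ℝ) 1,
      (∀ p, p * Cmean a b + (1 - p) * Hmean a b = s * (1 + (2 * p - 1) * t ^ 2)) ∧
        Tmean a b = s * (t / arctan t) := by
  have hsum : 0 < a + b := by positivity
  refine ⟨(a + b) / 2, by positivity, |(a - b) / (a + b)|, ⟨?_, ?_⟩, fun p => ?_, ?_⟩
  · exact abs_pos.2 (div_ne_zero (sub_ne_zero.2 hab) hsum.ne')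
  · rw [abs_div, abs_of_pos hsum, div_lt_one hsum, abs_sub_lt_iff]
    constructor <;> linarith
  · rw [sq_abs, mix_Cmean_Hmean_eq p hsum.ne']
  · rw [abs_div_arctan_abs, Tmean_eq hsum.ne']

lemma forall_mix_lt_Tmean_iff (p : ℝ) :
    (∀ a b : ℝ, 0 < a → 0 < b → a ≠ b →
        p * Cmean a b + (1 - p) * Hmean a b < Tmean a b) ↔
      ∀ t ∈ Ioo (0 : ℝ) 1, 1 + (2 * p - 1) * t ^ 2 < t / arctan t := by
  refine ⟨fun h t ht => ?_, fun h a b ha hb hab => ?_⟩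
  · obtain ⟨ht0, ht1⟩ := ht
    simpa only [mix_Cmean_Hmean_one_add_one_sub, Tmean_one_add_one_sub] using
      h (1 + t) (1 - t) (by linarith) (by linarith) (fun he => by linarith)
  · obtain ⟨s, hs, t, ht, hmix, hT⟩ := exists_mix_Cmean_Hmean_eq_and_Tmean_eq ha hb hab
    rw [hmix, hT]
    exact mul_lt_mul_of_pos_left (h t ht) hs

lemma forall_Tmean_lt_mix_iff (p : ℝ) :
    (∀ a b : ℝ, 0 < a → 0 < b → a ≠ b →
        Tmean a b < p * Cmean a b + (1 - p) * Hmean a b) ↔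
      ∀ t ∈ Ioo (0 : ℝ) 1, t / arctan t < 1 + (2 * p - 1) * t ^ 2 := by
  refine ⟨fun h t ht => ?_, fun h a b ha hb hab => ?_⟩
  · obtain ⟨ht0, ht1⟩ := ht
    simpa only [mix_Cmean_Hmean_one_add_one_sub, Tmean_one_add_one_sub] using
      h (1 + t) (1 - t) (by linarith) (by linarith) (fun he => by linarith)
  · obtain ⟨s, hs, t, ht, hmix, hT⟩ := exists_mix_Cmean_Hmean_eq_and_Tmean_eq ha hb hab
    rw [hmix, hT]
    exact mul_lt_mul_of_pos_left (h t ht) hs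

lemma three_mul_div_lt_arctan {t : ℝ} (ht : 0 < t) : 3 * t / (3 + t ^ 2) < arctan t := by
  let f : ℝ → ℝ := fun x => arctan x - 3 * x / (3 + x ^ 2)
  have hf : ∀ x, HasDerivAt f (4 * x ^ 4 / ((1 + x ^ 2) * (3 + x ^ 2) ^ 2)) x := by
    intro x
    refine ((hasDerivAt_arctan x).sub (((hasDerivAt_id x).const_mul 3).div
      ((hasDerivAt_pow 2 x).const_add 3) (by positivity))).congr_deriv ?_
    simp only [id]
    field_simp
    ring
  have hmono : StrictMonoOn f (Ici 0) :=
    strictMonoOn_of_hasDerivWithinAt_pos (convex_Ici 0)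
      (fun x _ => (hf x).continuousAt.continuousWithinAt) (fun x _ => (hf x).hasDerivWithinAt)
      (fun x hx => by rw [interior_Ici] at hx; have : 0 < x := hx; positivity)
  have := hmono self_mem_Ici ht.le ht
  simpa [f] using this

lemma arctan_le_sub_pow_three_div_three_add_pow_five_div_five {t : ℝ} (ht : 0 ≤ t) :
    arctan t ≤ t - t ^ 3 / 3 + t ^ 5 / 5 := by
  let f : ℝ → ℝ := fun x => x - x ^ 3 / 3 + x ^ 5 / 5 - arctan x
  have hf : ∀ x, HasDerivAt f (x ^ 6 / (1 + x ^ 2)) x := by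
    intro x
    refine ((((hasDerivAt_id x).sub ((hasDerivAt_pow 3 x).div_const 3)).add
      ((hasDerivAt_pow 5 x).div_const 5)).sub (hasDerivAt_arctan x)).congr_deriv ?_
    field_simp
    ring
  have hmono : MonotoneOn f (Ici 0) :=
    monotoneOn_of_hasDerivWithinAt_nonneg (convex_Ici 0)
      (fun x _ => (hf x).continuousAt.continuousWithinAt) (fun x _ => (hf x).hasDerivWithinAt)
      (fun x _ => by positivity)
  have := hmono self_mem_Ici ht ht
  simpa [f] using this

lemma lt_of_strictMonoOn_of_strictAntiOn {f : ℝ → ℝ} {a m b y t : ℝ}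
    (hinc : StrictMonoOn f (Icc a m)) (hdec : StrictAntiOn f (Icc m b))
    (ha : y ≤ f a) (hb : y ≤ f b) (ht : t ∈ Ioo a b) : y < f t := by
  obtain ⟨hat, htb⟩ := ht
  rcases le_or_gt t m with htm | hmt
  · exact ha.trans_lt (hinc ⟨le_rfl, hat.le.trans htm⟩ ⟨hat.le, htm⟩ hat)
  · exact hb.trans_lt (hdec ⟨hmt.le, htb.le⟩ ⟨hmt.le.trans htb.le, le_rfl⟩ htb)

lemma hasDerivAt_div_one_add_mul_sq_sub_arctan {c : ℝ} (hc : 0 ≤ c) (x : ℝ) :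
    HasDerivAt (fun x => x / (1 + c * x ^ 2) - arctan x)
      (x ^ 2 * (1 - 3 * c - c * (1 + c) * x ^ 2) / ((1 + c * x ^ 2) ^ 2 * (1 + x ^ 2))) x := by
  refine (((hasDerivAt_id x).div (((hasDerivAt_pow 2 x).const_mul c).const_add 1)
    (by positivity)).sub (hasDerivAt_arctan x)).congr_deriv ?_
  simp only [id]
  field_simp
  ring

lemma strictMonoOn_strictAntiOn_div_one_add_mul_sq_sub_arctan {c m : ℝ} (hc : 0 < c)
    (hm0 : 0 < m) (hm : c * (1 + c) * m ^ 2 = 1 - 3 * c) :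
    StrictMonoOn (fun x => x / (1 + c * x ^ 2) - arctan x) (Icc 0 m) ∧
      StrictAntiOn (fun x => x / (1 + c * x ^ 2) - arctan x) (Ici m) := by
  have hg := hasDerivAt_div_one_add_mul_sq_sub_arctan hc.le
  constructor
  · refine strictMonoOn_of_hasDerivWithinAt_pos (convex_Icc 0 m)
      (fun x _ => (hg x).continuousAt.continuousWithinAt) (fun x _ => (hg x).hasDerivWithinAt)
      fun x hx => ?_
    rw [interior_Icc] at hx
    have : c * (1 + c) * x ^ 2 < c * (1 + c) * m ^ 2 :=
      mul_lt_mul_of_pos_left (pow_lt_pow_left₀ hx.2 hx.1.le two_ne_zero) (by positivity)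
    have := hx.1
    exact div_pos (mul_pos (by positivity) (by linarith)) (by positivity)
  · refine strictAntiOn_of_hasDerivWithinAt_neg (convex_Ici m)
      (fun x _ => (hg x).continuousAt.continuousWithinAt) (fun x _ => (hg x).hasDerivWithinAt)
      fun x hx => ?_
    rw [interior_Ici] at hx
    have : c * (1 + c) * m ^ 2 < c * (1 + c) * x ^ 2 :=
      mul_lt_mul_of_pos_left (pow_lt_pow_left₀ hx hm0.le two_ne_zero) (by positivity)
    have := hm0.trans hx
    exact div_neg_of_neg_of_pos (mul_neg_of_pos_of_neg (by positivity) (by linarith))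
      (by positivity)

lemma one_add_mul_sq_mul_arctan_lt {t : ℝ} (ht : t ∈ Ioo (0 : ℝ) 1) :
    (1 + (4 / π - 1) * t ^ 2) * arctan t < t := by
  set c := 4 / π - 1 with hc
  have hc0 : 0 < c := by
    rw [hc, sub_pos, one_lt_div pi_pos]
    exact pi_lt_four
  have hc3 : 3 * c < 1 := by
    rw [hc, div_sub_one pi_pos.ne', mul_div_assoc', div_lt_one pi_pos]
    linarith [pi_gt_three]
  have hm : 0 < (1 - 3 * c) / (c * (1 + c)) := by apply div_pos <;> nlinarith
  obtain ⟨hinc, hdec⟩ := strictMonoOn_strictAntiOn_div_one_add_mul_sq_sub_arctan hc0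
    (sqrt_pos.2 hm) (by rw [sq_sqrt hm.le]; field_simp)
  have hg0 : 0 / (1 + c * 0 ^ 2) - arctan 0 = 0 := by simp
  have hg1 : 1 / (1 + c * 1 ^ 2) - arctan 1 = 0 := by
    rw [arctan_one, hc]
    field_simp
    ring
  have hgt := lt_of_strictMonoOn_of_strictAntiOn hinc (hdec.mono Icc_subset_Ici_self)
    hg0.ge hg1.ge ht
  rw [← lt_div_iff₀' (by positivity)]
  simpa using hgt

lemma div_arctan_lt_one_add_sq_div_three {t : ℝ} (ht : 0 < t) : t / arctan t < 1 + t ^ 2 / 3 := by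
  rw [div_lt_iff₀ (arctan_pos.2 ht)]
  calc t = 3 * t / (3 + t ^ 2) * (1 + t ^ 2 / 3) := by field_simp
    _ < arctan t * (1 + t ^ 2 / 3) := by gcongr; exact three_mul_div_lt_arctan ht
    _ = (1 + t ^ 2 / 3) * arctan t := mul_comm _ _

lemma one_add_mul_sq_lt_div_arctan {t : ℝ} (ht : t ∈ Ioo (0 : ℝ) 1) :
    1 + (4 / π - 1) * t ^ 2 < t / arctan t := by
  rw [lt_div_iff₀ (arctan_pos.2 ht.1)]
  exact one_add_mul_sq_mul_arctan_lt ht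

lemma exists_div_arctan_lt_of_lt {p : ℝ} (hp : 2 / π < p) :
    ∃ t ∈ Ioo (0 : ℝ) 1, t / arctan t < 1 + (2 * p - 1) * t ^ 2 := by
  have hcont : ContinuousAt (fun t => 1 + (2 * p - 1) * t ^ 2 - t / arctan t) 1 := by
    have : arctan 1 ≠ 0 := by rw [arctan_one]; positivity
    fun_prop (disch := exact this)
  have h1 : 0 < 1 + (2 * p - 1) * 1 ^ 2 - 1 / arctan 1 := by
    have := (div_lt_iff₀ pi_pos).1 hp
    rw [arctan_one]
    field_simp
    linarith
  have hev : ∀ᶠ t in 𝓝[<] 1, 0 < 1 + (2 * p - 1) * t ^ 2 - t / arctan t :=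
    (hcont.eventually (lt_mem_nhds h1)).filter_mono nhdsWithin_le_nhds
  obtain ⟨t, hpos, ht⟩ := (hev.and (Ioo_mem_nhdsLT one_pos)).exists
  exact ⟨t, ht, sub_pos.1 (by linarith)⟩

lemma exists_le_div_arctan_of_lt {δ : ℝ} (hδ0 : 0 ≤ δ) (hδ : δ < 1 / 3) :
    ∃ t ∈ Ioo (0 : ℝ) 1, 1 + δ * t ^ 2 ≤ t / arctan t := by
  set t := 1 / 3 - δ with htδ
  have ht0 : 0 < t := by linarith
  have ht1 : t ≤ 1 / 3 := by linarith
  refine ⟨t, ⟨ht0, by linarith⟩, ?_⟩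
  rw [le_div_iff₀ (arctan_pos.2 ht0)]
  calc (1 + δ * t ^ 2) * arctan t ≤ (1 + δ * t ^ 2) * (t - t ^ 3 / 3 + t ^ 5 / 5) := by
        gcongr; exact arctan_le_sub_pow_three_div_three_add_pow_five_div_five ht0.le
    _ = t + t ^ 3 * (-t + (1 / 5 - δ / 3) * t ^ 2 + δ * t ^ 4 / 5) := by rw [htδ]; ring
    _ ≤ t := by
        have ht2 : t ^ 2 ≤ t := by nlinarith
        have ht4 : t ^ 4 ≤ t := by nlinarith
        have : -t + (1 / 5 - δ / 3) * t ^ 2 + δ * t ^ 4 / 5 ≤ 0 := by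
          nlinarith [mul_le_mul_of_nonneg_left ht2 (by linarith : (0 : ℝ) ≤ 1 / 5 - δ / 3),
            mul_le_mul_of_nonneg_left ht4 hδ0, mul_nonneg hδ0 ht0.le]
        nlinarith [pow_pos ht0 3]

lemma forall_lt_div_arctan_iff (p : ℝ) :
    (∀ t ∈ Ioo (0 : ℝ) 1, 1 + (2 * p - 1) * t ^ 2 < t / arctan t) ↔ p ≤ 2 / π := by
  refine ⟨fun h => ?_, fun hp t ht => ?_⟩
  · by_contra! hp
    obtain ⟨t, ht, hlt⟩ := exists_div_arctan_lt_of_lt hp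
    exact (h t ht).asymm hlt
  · calc 1 + (2 * p - 1) * t ^ 2 ≤ 1 + (4 / π - 1) * t ^ 2 := by
          gcongr
          linarith [show 4 / π = 2 * (2 / π) by ring]
      _ < t / arctan t := one_add_mul_sq_lt_div_arctan ht

lemma forall_div_arctan_lt_iff (p : ℝ) :
    (∀ t ∈ Ioo (0 : ℝ) 1, t / arctan t < 1 + (2 * p - 1) * t ^ 2) ↔ 2 / 3 ≤ p := by
  refine ⟨fun h => ?_, fun hp t ht => ?_⟩
  · by_contra! hp
    -- `2p - 1` may be negative; the witness is built for the larger coefficient `max (2p - 1) 0`.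
    obtain ⟨t, ht, hle⟩ :=
      exists_le_div_arctan_of_lt (le_max_right (2 * p - 1) 0) (max_lt (by linarith) (by norm_num))
    have : (2 * p - 1) * t ^ 2 ≤ max (2 * p - 1) 0 * t ^ 2 := by gcongr; exact le_max_left _ _
    linarith [h t ht]
  · calc t / arctan t < 1 + t ^ 2 / 3 := div_arctan_lt_one_add_sq_div_three ht.1
      _ ≤ 1 + (2 * p - 1) * t ^ 2 := by nlinarith [sq_nonneg t]

theorem sharp_stmt_15 :
    (∀ a b : ℝ, 0 < a → 0 < b → a ≠ b →
        (2 / Real.pi) * Cmean a b + (1 - (2 / Real.pi)) * Hmean a b < Tmean a b ∧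
        Tmean a b < (2 / 3) * Cmean a b + (1 - (2 / 3)) * Hmean a b) ∧
    (∀ α : ℝ, (∀ a b : ℝ, 0 < a → 0 < b → a ≠ b →
        α * Cmean a b + (1 - α) * Hmean a b < Tmean a b) ↔ α ≤ (2 / Real.pi)) ∧
    (∀ β : ℝ, (∀ a b : ℝ, 0 < a → 0 < b → a ≠ b →
        Tmean a b < β * Cmean a b + (1 - β) * Hmean a b) ↔ β ≥ (2 / 3)) := by
  have lower (p : ℝ) := (forall_mix_lt_Tmean_iff p).trans (forall_lt_div_arctan_iff p)
  have upper (p : ℝ) := (forall_Tmean_lt_mix_iff p).trans (forall_div_arctan_lt_iff p)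
  exact ⟨fun a b ha hb hab =>
    ⟨(lower _).2 le_rfl a b ha hb hab, (upper _).2 le_rfl a b ha hb hab⟩, lower, upper⟩
end

section
/- For all a, b > 0 with a ≠ b, α·C(a,b) + (1-α)·T(a,b) < S(a,b) < β·C(a,b) + (1-β)·T(a,b) holds with α = (π - 2√2)/(√2·π - 2√2) and β = 1/4, and these constants are best possible. -/
open Real

/-!
Write `a > b > 0` as `k (cos θ + sin θ), k (cos θ - sin θ)` with `k > 0` and `θ ∈ (0, π/4)`. Then
`C = k / cos θ`, `S = k`, `T = k sin θ / θ`, and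
`S - (α C + (1 - α) T) = k / (θ cos θ) * G(α, θ)` with
`G(α, θ) = cos θ (θ - sin θ) - α (θ - sin θ cos θ)`, which is decreasing in `α`.
So the inequalities reduce to `G(α₀, ·) > 0` and `G(1/4, ·) < 0` on `(0, π/4)`, and their sharpness
to `G(α, π/4) = (π/4 - 1/2)(α₀ - α)` and `G(β, θ) / θ³ → (1 - 4β) / 6` as `θ → 0⁺`.

The signs of `G(α₀, ·)` and `G(1/4, ·)` are read off from their fourth derivatives: these functions
are linear combinations of `1, θ, sin θ, cos θ, θ sin θ, θ cos θ, sin 2θ, cos 2θ`, a family closed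
under differentiation. The fourth derivative of `G(1/4, ·)` is negative and all lower ones vanish at
`0`. The fourth derivative of `G(α₀, ·)` is negative, so each antiderivative in the chain is first
positive, then negative on `(0, π/4)`, and `G(α₀, ·)` itself vanishes at both ends.
-/

open Set Filter Topology

def PosThenNegOn (F : ℝ → ℝ) (a b : ℝ) : Prop :=
  ∃ c ∈ Ioo a b, (∀ x ∈ Ioo a c, 0 < F x) ∧ ∀ x ∈ Ioo c b, F x < 0

theorem posThenNegOn_of_strictAntiOn {F : ℝ → ℝ} {a b c : ℝ} (hc : c ∈ Ico a b)
    (hpos : ∀ x ∈ Ioo a c, 0 < F x) (hFc : 0 < F c) (hcont : ContinuousOn F (Icc c b))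
    (hanti : StrictAntiOn F (Icc c b)) (hFb : F b < 0) : PosThenNegOn F a b := by
  obtain ⟨d, hd, hFd⟩ := intermediate_value_Ioo' hc.2.le hcont ⟨hFb, hFc⟩
  have hdmem : d ∈ Icc c b := Ioo_subset_Icc_self hd
  refine ⟨d, ⟨hc.1.trans_lt hd.1, hd.2⟩, fun x hx => ?_, fun x hx => ?_⟩
  · rcases lt_trichotomy x c with hxc | hxc | hcx
    · exact hpos x ⟨hx.1, hxc⟩
    · exact hxc ▸ hFc
    · exact hFd ▸ hanti ⟨hcx.le, hx.2.trans hd.2 |>.le⟩ hdmem hx.2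
  · exact hFd ▸ hanti hdmem ⟨hd.1.trans hx.1 |>.le, hx.2.le⟩ hx.1

structure TrigComb where
  k1 : ℝ
  kx : ℝ
  ksin : ℝ
  kcos : ℝ
  kxsin : ℝ
  kxcos : ℝ
  ksin2 : ℝ
  kcos2 : ℝ

namespace TrigComb

noncomputable def eval (f : TrigComb) (x : ℝ) : ℝ :=
  f.k1 + f.kx * x + f.ksin * sin x + f.kcos * cos x + f.kxsin * (x * sin x) +
    f.kxcos * (x * cos x) + f.ksin2 * sin (2 * x) + f.kcos2 * cos (2 * x)

def deriv (f : TrigComb) : TrigComb :=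
  ⟨f.kx, 0, f.kxsin - f.kcos, f.ksin + f.kxcos, -f.kxcos, f.kxsin, -2 * f.kcos2, 2 * f.ksin2⟩

theorem hasDerivAt_eval (f : TrigComb) (x : ℝ) : HasDerivAt f.eval (f.deriv.eval x) x := by
  have h2 : HasDerivAt (fun x : ℝ => 2 * x) 2 x := by simpa using (hasDerivAt_id x).const_mul 2
  have := (((((((hasDerivAt_const x f.k1).add ((hasDerivAt_id x).const_mul f.kx)).add
    ((hasDerivAt_sin x).const_mul f.ksin)).add ((hasDerivAt_cos x).const_mul f.kcos)).add
    (((hasDerivAt_id x).mul (hasDerivAt_sin x)).const_mul f.kxsin)).add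
    (((hasDerivAt_id x).mul (hasDerivAt_cos x)).const_mul f.kxcos)).add
    (((hasDerivAt_sin (2 * x)).comp x h2).const_mul f.ksin2)).add
    (((hasDerivAt_cos (2 * x)).comp x h2).const_mul f.kcos2)
  refine this.congr_deriv ?_
  simp only [eval, deriv, id]
  ring

theorem continuous_eval (f : TrigComb) : Continuous f.eval :=
  continuous_iff_continuousAt.2 fun x => (f.hasDerivAt_eval x).continuousAt

@[simp] theorem eval_zero (f : TrigComb) : f.eval 0 = f.k1 + f.kcos + f.kcos2 := by
  simp [eval]

@[simp] theorem eval_pi_div_four (f : TrigComb) :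
    f.eval (π / 4) = f.k1 + f.kx * (π / 4) + (f.ksin + f.kcos) * (√2 / 2) +
      (f.kxsin + f.kxcos) * (π / 4 * (√2 / 2)) + f.ksin2 := by
  simp only [eval, sin_pi_div_four, cos_pi_div_four, show 2 * (π / 4) = π / 2 by ring,
    sin_pi_div_two, cos_pi_div_two]
  ring

theorem strictMonoOn_of_deriv_pos {f : TrigComb} {a b : ℝ}
    (h : ∀ x ∈ Ioo a b, 0 < f.deriv.eval x) : StrictMonoOn f.eval (Icc a b) :=
  _root_.strictMonoOn_of_deriv_pos (convex_Icc a b) f.continuous_eval.continuousOn fun x hx => by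
    rw [(f.hasDerivAt_eval x).deriv]; exact h x (by simpa using hx)

theorem strictAntiOn_of_deriv_neg {f : TrigComb} {a b : ℝ}
    (h : ∀ x ∈ Ioo a b, f.deriv.eval x < 0) : StrictAntiOn f.eval (Icc a b) :=
  _root_.strictAntiOn_of_deriv_neg (convex_Icc a b) f.continuous_eval.continuousOn fun x hx => by
    rw [(f.hasDerivAt_eval x).deriv]; exact h x (by simpa using hx)

theorem pos_of_deriv_pos {f : TrigComb} {a b : ℝ} (hf : f.eval a = 0)
    (h : ∀ x ∈ Ioo a b, 0 < f.deriv.eval x) : ∀ x ∈ Ioo a b, 0 < f.eval x := fun _ hx =>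
  hf ▸ strictMonoOn_of_deriv_pos h (left_mem_Icc.2 (hx.1.trans hx.2).le)
    (Ioo_subset_Icc_self hx) hx.1

theorem pos_and_strictAntiOn_of_deriv {f : TrigComb} {a b c : ℝ} (hf : f.eval a = 0)
    (hc : c ∈ Ioo a b) (hpos : ∀ x ∈ Ioo a c, 0 < f.deriv.eval x)
    (hneg : ∀ x ∈ Ioo c b, f.deriv.eval x < 0) :
    (∀ x ∈ Ioc a c, 0 < f.eval x) ∧ StrictAntiOn f.eval (Icc c b) :=
  ⟨fun _ hx => hf ▸ strictMonoOn_of_deriv_pos hpos (left_mem_Icc.2 hc.1.le)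
    (Ioc_subset_Icc_self hx) hx.1, strictAntiOn_of_deriv_neg hneg⟩

theorem posThenNegOn_of_deriv {f : TrigComb} {a b : ℝ} (hf : f.eval a = 0)
    (hd : PosThenNegOn f.deriv.eval a b) (hb : f.eval b < 0) : PosThenNegOn f.eval a b := by
  obtain ⟨c, hc, hpos, hneg⟩ := hd
  obtain ⟨hfpos, hanti⟩ := pos_and_strictAntiOn_of_deriv hf hc hpos hneg
  exact posThenNegOn_of_strictAntiOn ⟨hc.1.le, hc.2⟩ (fun x hx => hfpos x (Ioo_subset_Ioc_self hx))
    (hfpos c (right_mem_Ioc.2 hc.1)) f.continuous_eval.continuousOn hanti hb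

theorem pos_of_deriv_posThenNegOn {f : TrigComb} {a b : ℝ} (hf : f.eval a = 0)
    (hd : PosThenNegOn f.deriv.eval a b) (hb : 0 ≤ f.eval b) : ∀ x ∈ Ioo a b, 0 < f.eval x := by
  obtain ⟨c, hc, hpos, hneg⟩ := hd
  obtain ⟨hfpos, hanti⟩ := pos_and_strictAntiOn_of_deriv hf hc hpos hneg
  intro x hx
  rcases le_or_gt x c with hxc | hcx
  · exact hfpos x ⟨hx.1, hxc⟩
  · exact hb.trans_lt (hanti ⟨hcx.le, hx.2.le⟩ (right_mem_Icc.2 hc.2.le) hx.2)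

end TrigComb

theorem mul_cos_lt_sin {θ : ℝ} (h0 : 0 < θ) (h1 : θ < π / 2) : θ * cos θ < sin θ := by
  have hc : 0 < cos θ := cos_pos_of_mem_Ioo ⟨by linarith [pi_pos], h1⟩
  have := lt_tan h0 h1
  rwa [tan_eq_sin_div_cos, lt_div_iff₀ hc] at this

theorem sin_mul_cos_lt_self {θ : ℝ} (h0 : 0 < θ) : sin θ * cos θ < θ := by
  have := sin_lt (mul_pos two_pos h0)
  rw [sin_two_mul] at this
  linarith

theorem sin_lt_and_lt_cos_of_mem_Ioo {θ : ℝ} (hθ : θ ∈ Ioo 0 (π / 4)) :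
    sin θ < √2 / 2 ∧ √2 / 2 < cos θ := by
  have hpi := pi_pos
  constructor
  · rw [← sin_pi_div_four]
    exact sin_lt_sin_of_lt_of_le_pi_div_two (by linarith [hθ.1]) (by linarith) hθ.2
  · rw [← cos_pi_div_four]
    exact cos_lt_cos_of_nonneg_of_le_pi_div_two hθ.1.le (by linarith) hθ.2

theorem seven_tenths_lt_sqrt_two_div_two : (7 / 10 : ℝ) < √2 / 2 := by
  have : (7 / 5 : ℝ) < √2 := by rw [lt_sqrt (by norm_num)]; norm_num
  linarith

noncomputable def meanGap (α θ : ℝ) : ℝ := cos θ * (θ - sin θ) - α * (θ - sin θ * cos θ)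

theorem strictAnti_meanGap {θ : ℝ} (hθ : 0 < θ) : StrictAnti (meanGap · θ) := fun α α' h => by
  have := sin_mul_cos_lt_self hθ
  simp only [meanGap]
  nlinarith

theorem meanGap_quarter_neg : ∀ θ ∈ Ioo 0 (π / 4), meanGap (1 / 4) θ < 0 := by
  let f : TrigComb := ⟨0, 1 / 4, 0, 0, 0, -1, 3 / 8, 0⟩
  have hf : ∀ θ, f.eval θ = -meanGap (1 / 4) θ := fun θ => by
    simp only [f, TrigComb.eval, meanGap, sin_two_mul]; ring
  have h4 : ∀ θ ∈ Ioo 0 (π / 4), 0 < f.deriv.deriv.deriv.deriv.eval θ := fun θ hθ => by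
    have hs : 0 < sin θ := sin_pos_of_pos_of_lt_pi hθ.1 (by linarith [hθ.2, pi_pos])
    have hθc := mul_cos_lt_sin hθ.1 (by linarith [hθ.2, pi_pos])
    have hc := (sin_lt_and_lt_cos_of_mem_Ioo hθ).2
    have := seven_tenths_lt_sqrt_two_div_two
    simp only [f, TrigComb.deriv, TrigComb.eval, sin_two_mul, cos_two_mul]
    nlinarith [mul_pos hs (by linarith : (0 : ℝ) < 12 * cos θ - 5)]
  have h3 := TrigComb.pos_of_deriv_pos (by norm_num [f, TrigComb.deriv]) h4
  have h2 := TrigComb.pos_of_deriv_pos (by norm_num [f, TrigComb.deriv]) h3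
  have h1 := TrigComb.pos_of_deriv_pos (by norm_num [f, TrigComb.deriv]) h2
  have h0 := TrigComb.pos_of_deriv_pos (by norm_num [f]) h1
  exact fun θ hθ => by linarith [hf θ, h0 θ hθ]

noncomputable def optimalAlpha : ℝ := (π - 2 * √2) / (√2 * π - 2 * √2)

theorem sqrt_two_mem_Ioo : √2 ∈ Ioo (1.4142 : ℝ) 1.4143 := by
  constructor
  · rw [lt_sqrt (by norm_num)]; norm_num
  · rw [sqrt_lt' (by norm_num)]; norm_num

theorem optimalAlpha_mem_Ioo : optimalAlpha ∈ Ioo (19 / 100 : ℝ) (1 / 5) := by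
  obtain ⟨hs1, hs2⟩ := sqrt_two_mem_Ioo
  have hp1 := pi_gt_d4
  have hp2 := pi_lt_d4
  have hden : 0 < √2 * π - 2 * √2 := by nlinarith
  unfold optimalAlpha
  constructor
  · rw [lt_div_iff₀ hden]; nlinarith [mul_lt_mul'' hs2 hp2 (by positivity) (by positivity)]
  · rw [div_lt_iff₀ hden]; nlinarith [mul_lt_mul'' hs1 hp1 (by norm_num) (by norm_num)]

theorem meanGap_pi_div_four (α : ℝ) :
    meanGap α (π / 4) = (π / 4 - 1 / 2) * (optimalAlpha - α) := by
  have hs : √2 ^ 2 = 2 := sq_sqrt zero_le_two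
  have hπ : π - 2 ≠ 0 := by linarith [pi_gt_three]
  have hs0 : √2 ≠ 0 := by positivity
  simp only [meanGap, optimalAlpha, sin_pi_div_four, cos_pi_div_four,
    show √2 * π - 2 * √2 = √2 * (π - 2) by ring]
  field_simp
  linear_combination (2 * π ^ 2 - 4 * π + √2 * (8 - 4 * π + 4 * π * α - 8 * α)) * hs

theorem meanGap_optimalAlpha_pos : ∀ θ ∈ Ioo 0 (π / 4), 0 < meanGap optimalAlpha θ := by
  obtain ⟨hA1, hA2⟩ := optimalAlpha_mem_Ioo
  set A := optimalAlpha
  obtain ⟨hs1, hs2⟩ := sqrt_two_mem_Ioo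
  have hp1 := pi_gt_d2
  have hp2 := pi_lt_d2
  let f : TrigComb := ⟨0, -A, 0, 0, 0, 1, -(1 - A) / 2, 0⟩
  have hf : ∀ θ, f.eval θ = meanGap A θ := fun θ => by
    simp only [f, TrigComb.eval, meanGap, sin_two_mul]; ring
  have h4 : ∀ θ ∈ Ioo 0 (π / 4), f.deriv.deriv.deriv.deriv.eval θ < 0 := fun θ hθ => by
    have hs : 0 < sin θ := sin_pos_of_pos_of_lt_pi hθ.1 (by linarith [hθ.2, pi_pos])
    have hθc := mul_cos_lt_sin hθ.1 (by linarith [hθ.2, pi_pos])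
    have hc := (sin_lt_and_lt_cos_of_mem_Ioo hθ).2
    have := seven_tenths_lt_sqrt_two_div_two
    have hk : 5 < 16 * (1 - A) * cos θ := by nlinarith
    simp only [f, TrigComb.deriv, TrigComb.eval, sin_two_mul, cos_two_mul]
    nlinarith [mul_pos hs (sub_pos.2 hk)]
  have h3 : PosThenNegOn f.deriv.deriv.deriv.eval 0 (π / 4) :=
    posThenNegOn_of_strictAntiOn ⟨le_rfl, by positivity⟩ (by simp)
      (by norm_num [f, TrigComb.deriv]; linarith) (TrigComb.continuous_eval _).continuousOn
      (TrigComb.strictAntiOn_of_deriv_neg h4)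
      (by norm_num [f, TrigComb.deriv]; nlinarith)
  have h2 := TrigComb.posThenNegOn_of_deriv (by norm_num [f, TrigComb.deriv]) h3
    (by norm_num [f, TrigComb.deriv]; nlinarith)
  have h1 := TrigComb.posThenNegOn_of_deriv (by norm_num [f, TrigComb.deriv]; ring) h2
    (by norm_num [f, TrigComb.deriv]; nlinarith)
  have h0 := TrigComb.pos_of_deriv_posThenNegOn (by norm_num [f]) h1
    (by rw [hf, meanGap_pi_div_four, sub_self, mul_zero])
  exact fun θ hθ => hf θ ▸ h0 θ hθ

theorem le_optimalAlpha_of_meanGap_pos {α : ℝ} (h : ∀ θ ∈ Ioo 0 (π / 4), 0 < meanGap α θ) :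
    α ≤ optimalAlpha := by
  have hcont : Continuous (meanGap α) := by unfold meanGap; fun_prop
  have hlim : 0 ≤ meanGap α (π / 4) :=
    ge_of_tendsto (hcont.tendsto _ |>.mono_left nhdsWithin_le_nhds)
      (eventually_of_mem (Ioo_mem_nhdsLT (by positivity)) fun θ hθ => (h θ hθ).le)
  rw [meanGap_pi_div_four] at hlim
  have hπ : 0 < π / 4 - 1 / 2 := by linarith [pi_gt_three]
  linarith [(mul_nonneg_iff_of_pos_left hπ).1 hlim]

theorem tendsto_sub_sin_div_pow_three :
    Tendsto (fun x => (x - sin x) / x ^ 3) (𝓝[>] 0) (𝓝 (1 / 6)) := by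
  have hbound : ∀ x ∈ Ioo (0 : ℝ) 1, |(x - sin x) / x ^ 3 - 1 / 6| ≤ x ^ 2 / 100 := fun x hx => by
    have hx0 : x ≠ 0 := hx.1.ne'
    have hx3 : 0 < x ^ 3 := pow_pos hx.1 3
    have := sin_bound (abs_le.2 ⟨by linarith [hx.1], hx.2.le⟩)
    rw [abs_of_pos hx.1] at this
    rw [show (x - sin x) / x ^ 3 - 1 / 6 = -(sin x - (x - x ^ 3 / 6)) / x ^ 3 by field_simp; ring,
      abs_div, abs_neg, abs_of_pos hx3, div_le_iff₀ hx3]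
    linarith [show x ^ 2 / 100 * x ^ 3 = x ^ 5 / 100 by ring]
  have hlim : Tendsto (fun x : ℝ => x ^ 2 / 100) (𝓝[>] 0) (𝓝 0) :=
    tendsto_nhdsWithin_of_tendsto_nhds <| by
      simpa using ((continuous_pow 2).div_const 100 : Continuous fun x : ℝ => x ^ 2 / 100).tendsto 0
  rw [tendsto_iff_norm_sub_tendsto_zero]
  exact squeeze_zero' (Eventually.of_forall fun _ => norm_nonneg _)
    (eventually_of_mem (Ioo_mem_nhdsGT one_pos) hbound) hlim

theorem tendsto_meanGap_div_pow_three (β : ℝ) :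
    Tendsto (fun θ => meanGap β θ / θ ^ 3) (𝓝[>] 0) (𝓝 ((1 - 4 * β) / 6)) := by
  have hdouble : Tendsto (fun θ : ℝ => 2 * θ) (𝓝[>] 0) (𝓝[>] 0) := by
    refine tendsto_nhdsWithin_iff.2 ⟨tendsto_nhdsWithin_of_tendsto_nhds ?_, ?_⟩
    · simpa using (continuous_const_mul (2 : ℝ)).tendsto 0
    · filter_upwards [self_mem_nhdsWithin] with θ (hθ : 0 < θ)
      exact mul_pos two_pos hθ
  have hcos : Tendsto cos (𝓝[>] 0) (𝓝 1) :=
    tendsto_nhdsWithin_of_tendsto_nhds (by simpa using continuous_cos.tendsto 0)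
  have hlim := (hcos.mul tendsto_sub_sin_div_pow_three).sub
    ((tendsto_sub_sin_div_pow_three.comp hdouble).const_mul (4 * β))
  refine (hlim.congr' (eventually_mem_nhdsWithin.mono fun θ (hθ : 0 < θ) => ?_)).trans ?_
  · simp only [Function.comp, meanGap, sin_two_mul]
    field_simp
    ring
  · exact le_of_eq (by ring_nf)

theorem quarter_le_of_meanGap_neg {β : ℝ} (h : ∀ θ ∈ Ioo 0 (π / 4), meanGap β θ < 0) :
    1 / 4 ≤ β := by
  have := le_of_tendsto (tendsto_meanGap_div_pow_three β) <|
    eventually_of_mem (Ioo_mem_nhdsGT (by positivity)) fun θ hθ =>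
      div_nonpos_of_nonpos_of_nonneg (h θ hθ).le (pow_pos hθ.1 3).le
  linarith

theorem Cmean_comm (a b : ℝ) : Cmean a b = Cmean b a := by
  rw [Cmean, Cmean, add_comm (a ^ 2), add_comm a]

theorem means_cos_add_sin {k θ : ℝ} (hk : 0 < k) (hθ : θ ∈ Ioo (-(π / 2)) (π / 2)) :
    Cmean (k * (cos θ + sin θ)) (k * (cos θ - sin θ)) = k / cos θ ∧
    Smean (k * (cos θ + sin θ)) (k * (cos θ - sin θ)) = k ∧
    Tmean (k * (cos θ + sin θ)) (k * (cos θ - sin θ)) = k * sin θ / θ := by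
  have hc : cos θ ≠ 0 := (cos_pos_of_mem_Ioo hθ).ne'
  have hk2 : 2 * k ≠ 0 := mul_ne_zero two_ne_zero hk.ne'
  have hsc := sin_sq_add_cos_sq θ
  have hsum : k * (cos θ + sin θ) + k * (cos θ - sin θ) = 2 * k * cos θ := by ring
  have hdiff : k * (cos θ + sin θ) - k * (cos θ - sin θ) = 2 * k * sin θ := by ring
  refine ⟨?_, ?_, ?_⟩
  · rw [Cmean, hsum, div_eq_div_iff (mul_ne_zero hk2 hc) hc]
    linear_combination 2 * k ^ 2 * cos θ * hsc
  · rw [Smean, show ((k * (cos θ + sin θ)) ^ 2 + (k * (cos θ - sin θ)) ^ 2) / 2 = k ^ 2 by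
      linear_combination k ^ 2 * hsc, sqrt_sq hk.le]
  · rw [Tmean, hsum, hdiff, mul_div_mul_left _ _ hk2, ← tan_eq_sin_div_cos, arctan_tan hθ.1 hθ.2]
    ring

theorem exists_means_eq {a b : ℝ} (ha : 0 < a) (hb : 0 < b) (hne : a ≠ b) :
    ∃ k > 0, ∃ θ ∈ Ioo 0 (π / 4),
      Cmean a b = k / cos θ ∧ Smean a b = k ∧ Tmean a b = k * sin θ / θ := by
  wlog hab : b < a generalizing a b
  · rw [Cmean_comm, Smean_comm, Tmean_comm]
    exact this hb ha hne.symm (lt_of_le_of_ne (not_lt.1 hab) hne)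
  set x := (a - b) / (a + b)
  set θ := arctan x
  have hx0 : 0 < x := div_pos (by linarith) (by linarith)
  have hx1 : x < 1 := (div_lt_one (by linarith)).2 (by linarith)
  have hθ : θ ∈ Ioo 0 (π / 4) := by
    rw [← arctan_zero, ← arctan_one]
    exact ⟨arctan_strictMono hx0, arctan_strictMono hx1⟩
  have hc : 0 < cos θ := cos_pos_of_mem_Ioo ⟨by linarith [hθ.1, pi_pos], by linarith [hθ.2, pi_pos]⟩
  have hs : sin θ = x * cos θ := by
    rw [← tan_arctan x, tan_eq_sin_div_cos]; exact (div_mul_cancel₀ _ hc.ne').symm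
  set k := (a + b) / 2 / cos θ
  have hk : 0 < k := by positivity
  have hka : a = k * (cos θ + sin θ) := by
    simp only [k, hs, x]; field_simp; ring
  have hkb : b = k * (cos θ - sin θ) := by
    simp only [k, hs, x]; field_simp; ring
  refine ⟨k, hk, θ, hθ, ?_⟩
  rw [hka, hkb]
  exact means_cos_add_sin hk ⟨by linarith [hθ.1, pi_pos], by linarith [hθ.2, pi_pos]⟩

theorem forall_means_iff (P : ℝ → ℝ → ℝ → Prop) :
    (∀ a b : ℝ, 0 < a → 0 < b → a ≠ b → P (Cmean a b) (Smean a b) (Tmean a b)) ↔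
      ∀ k > 0, ∀ θ ∈ Ioo 0 (π / 4), P (k / cos θ) k (k * sin θ / θ) := by
  refine ⟨fun h k hk θ hθ => ?_, fun h a b ha hb hne => ?_⟩
  · have hs : 0 < sin θ := sin_pos_of_pos_of_lt_pi hθ.1 (by linarith [hθ.2, pi_pos])
    have hcs : sin θ < cos θ := by linarith [sin_lt_and_lt_cos_of_mem_Ioo hθ]
    obtain ⟨hC, hS, hT⟩ :=
      means_cos_add_sin (θ := θ) hk ⟨by linarith [hθ.1, pi_pos], by linarith [hθ.2, pi_pos]⟩
    have := h (k * (cos θ + sin θ)) (k * (cos θ - sin θ)) (by nlinarith) (by nlinarith)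
      (by intro h; nlinarith)
    rwa [hC, hS, hT] at this
  · obtain ⟨k, hk, θ, hθ, hC, hS, hT⟩ := exists_means_eq ha hb hne
    rw [hC, hS, hT]
    exact h k hk θ hθ

theorem sub_comb_eq_mul_meanGap {k θ : ℝ} (α : ℝ) (hθ : θ ≠ 0) (hc : cos θ ≠ 0) :
    k - (α * (k / cos θ) + (1 - α) * (k * sin θ / θ)) = k / (θ * cos θ) * meanGap α θ := by
  rw [meanGap]
  field_simp
  ring

theorem comb_lt_iff_meanGap_pos {k θ : ℝ} (α : ℝ) (hk : 0 < k) (hθ : θ ∈ Ioo 0 (π / 4)) :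
    α * (k / cos θ) + (1 - α) * (k * sin θ / θ) < k ↔ 0 < meanGap α θ := by
  have hc : 0 < cos θ := lt_trans (by positivity) (sin_lt_and_lt_cos_of_mem_Ioo hθ).2
  rw [← sub_pos, sub_comb_eq_mul_meanGap α hθ.1.ne' hc.ne']
  exact mul_pos_iff_of_pos_left (by have := hθ.1; positivity)

theorem lt_comb_iff_meanGap_neg {k θ : ℝ} (β : ℝ) (hk : 0 < k) (hθ : θ ∈ Ioo 0 (π / 4)) :
    k < β * (k / cos θ) + (1 - β) * (k * sin θ / θ) ↔ meanGap β θ < 0 := by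
  have hc : 0 < cos θ := lt_trans (by positivity) (sin_lt_and_lt_cos_of_mem_Ioo hθ).2
  have hpos : 0 < k / (θ * cos θ) := by have := hθ.1; positivity
  rw [← sub_neg, sub_comb_eq_mul_meanGap β hθ.1.ne' hc.ne']
  exact ⟨fun h => neg_of_mul_neg_right h hpos.le, mul_neg_of_pos_of_neg hpos⟩

theorem forall_comb_lt_Smean_iff (α : ℝ) :
    (∀ a b : ℝ, 0 < a → 0 < b → a ≠ b → α * Cmean a b + (1 - α) * Tmean a b < Smean a b) ↔
      α ≤ optimalAlpha := by
  refine (forall_means_iff fun C S T => α * C + (1 - α) * T < S).trans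
    ⟨fun h => le_optimalAlpha_of_meanGap_pos fun θ hθ =>
      (comb_lt_iff_meanGap_pos α one_pos hθ).1 (h 1 one_pos θ hθ), fun hα k hk θ hθ => ?_⟩
  exact (comb_lt_iff_meanGap_pos α hk hθ).2 <|
    (meanGap_optimalAlpha_pos θ hθ).trans_le ((strictAnti_meanGap hθ.1).antitone hα)

theorem forall_Smean_lt_comb_iff (β : ℝ) :
    (∀ a b : ℝ, 0 < a → 0 < b → a ≠ b → Smean a b < β * Cmean a b + (1 - β) * Tmean a b) ↔
      1 / 4 ≤ β := by
  refine (forall_means_iff fun C S T => S < β * C + (1 - β) * T).trans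
    ⟨fun h => quarter_le_of_meanGap_neg fun θ hθ =>
      (lt_comb_iff_meanGap_neg β one_pos hθ).1 (h 1 one_pos θ hθ), fun hβ k hk θ hθ => ?_⟩
  exact (lt_comb_iff_meanGap_neg β hk hθ).2 <|
    ((strictAnti_meanGap hθ.1).antitone hβ).trans_lt (meanGap_quarter_neg θ hθ)

theorem sharp_stmt_16 :
    (∀ a b : ℝ, 0 < a → 0 < b → a ≠ b →
        ((Real.pi - 2 * Real.sqrt 2) / (Real.sqrt 2 * Real.pi - 2 * Real.sqrt 2)) * Cmean a b + (1 - ((Real.pi - 2 * Real.sqrt 2) / (Real.sqrt 2 * Real.pi - 2 * Real.sqrt 2))) * Tmean a b < Smean a b ∧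
        Smean a b < (1 / 4) * Cmean a b + (1 - (1 / 4)) * Tmean a b) ∧
    (∀ α : ℝ, (∀ a b : ℝ, 0 < a → 0 < b → a ≠ b →
        α * Cmean a b + (1 - α) * Tmean a b < Smean a b) ↔ α ≤ ((Real.pi - 2 * Real.sqrt 2) / (Real.sqrt 2 * Real.pi - 2 * Real.sqrt 2))) ∧
    (∀ β : ℝ, (∀ a b : ℝ, 0 < a → 0 < b → a ≠ b →
        Smean a b < β * Cmean a b + (1 - β) * Tmean a b) ↔ β ≥ (1 / 4)) := by
  refine ⟨fun a b ha hb hne => ⟨?_, ?_⟩, forall_comb_lt_Smean_iff, forall_Smean_lt_comb_iff⟩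
  · exact (forall_comb_lt_Smean_iff optimalAlpha).2 le_rfl a b ha hb hne
  · exact (forall_Smean_lt_comb_iff (1 / 4)).2 le_rfl a b ha hb hne
end
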